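/- arXiv:2207.00802 — 5 statements merged into one kernel-verified Lean document; each statement's English description precedes it below -/
import Mathlib

section
/- Let K be a field, T a nilpotent endomorphism of K^n, and let v_1, …, v_ℓ be linearly independent vectors spanning the subspace L. Then T(L) ⊆ L if and only if for every z ∈ K the ℓ-th exterior power of id + z·T fixes the wedge product: ⋀^ℓ(id + z·T)(v_1 ∧ ⋯ ∧ v_ℓ) = v_1 ∧ ⋯ ∧ v_ℓ. -/
open ExteriorAlgebra

section AuxLemmas

open Polynomial

lemma det_one_add_of_isNilpotent {K : Type*} [Field K] {M : Type*} [AddCommGroup M] [Module K M]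
    [Module.Finite K M] (N : Module.End K M) (hN : IsNilpotent N) :
    LinearMap.det (1 + N) = 1 := by
  classical
  let b := Module.Free.chooseBasis K M
  set A := LinearMap.toMatrixAlgEquiv b N with hAdef
  have hnilA : IsNilpotent A := hN.map (LinearMap.toMatrixAlgEquiv b)
  have h1 : A.charpoly = X ^ (Fintype.card (Module.Free.ChooseBasisIndex K M)) := by
    have h := Matrix.isNilpotent_charpoly_sub_pow_of_isNilpotent hnilA
    have := h.eq_zero
    rwa [sub_eq_zero] at this
  have h2 : A.charpolyRev = 1 := by
    rw [← Matrix.reverse_charpoly, h1,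
      ← mul_one (X ^ Fintype.card (Module.Free.ChooseBasisIndex K M)),
      Polynomial.reverse_X_pow_mul]
    simpa using Polynomial.reverse_C (1 : K)
  have h3 : (1 - (X : Polynomial K) • A.map Polynomial.C).map (Polynomial.evalRingHom (-1 : K)) = 1 + A := by
    ext i j
    rcases eq_or_ne i j with rfl | hij
    · simp [Matrix.one_apply, Matrix.sub_apply, Matrix.smul_apply, Matrix.map_apply, smul_eq_mul]
    · simp [Matrix.one_apply, hij, Matrix.sub_apply, Matrix.smul_apply, Matrix.map_apply, smul_eq_mul]
  have h4 : (1 + A).det = 1 := by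
    have h5 := (RingHom.map_det (Polynomial.evalRingHom (-1 : K)) (1 - (X : Polynomial K) • A.map Polynomial.C)).symm
    rw [RingHom.mapMatrix_apply, h3] at h5
    rw [h5]
    have h6 : (1 - (X : Polynomial K) • A.map Polynomial.C).det = A.charpolyRev := rfl
    rw [h6, h2]
    simp
  rw [← LinearMap.det_toMatrix b (1 + N), map_add, LinearMap.toMatrix_one]
  exact h4


lemma alt_apply_comp_end {K M N ι : Type*} [Field K] [AddCommGroup M] [Module K M]
    [AddCommGroup N] [Module K N] [Fintype ι] [DecidableEq ι]
    (e : Module.Basis ι K M) (f : M [⋀^ι]→ₗ[K] N) (g : M →ₗ[K] M) :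
    f (g ∘ e) = LinearMap.det g • f e := by
  have key : f = (LinearMap.toSpanSingleton K N (f e)).compAlternatingMap e.det := by
    refine Module.Basis.ext_alternating e fun i hi => ?_
    let σ : Equiv.Perm ι := Equiv.ofBijective i (Finite.injective_iff_bijective.1 hi)
    have h1 : (fun j => e (i j)) = e ∘ σ := rfl
    rw [h1, f.map_perm, LinearMap.compAlternatingMap_apply, e.det.map_perm]
    simp [LinearMap.toSpanSingleton_apply, Module.Basis.det_self, Units.smul_def, Int.cast_smul_eq_zsmul]
  conv_lhs => rw [key]
  simp only [LinearMap.compAlternatingMap_apply, LinearMap.toSpanSingleton_apply,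
    Module.Basis.det_comp, Module.Basis.det_self, mul_one]

lemma iMulti_ne_zero {K : Type*} [Field K] {n m : ℕ} (u : Fin m → (Fin n → K))
    (hu : LinearIndependent K u) :
    ExteriorAlgebra.ιMulti K m u ≠ 0 := by
  classical
  set W := Submodule.span K (Set.range u) with hW
  let bu : Module.Basis (Fin m) K W := Module.Basis.span hu
  obtain ⟨W', hW'⟩ := Submodule.exists_isCompl W
  let π : (Fin n → K) →ₗ[K] W := Submodule.linearProjOfIsCompl W W' hW'
  let P : (Fin n → K) →ₗ[K] (Fin m → K) := LinearMap.pi fun j => bu.coord j ∘ₗ π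
  let f : ((Fin n → K)) [⋀^Fin m]→ₗ[K] K := Matrix.detRowAlternating.compLinearMap P
  have hP : ∀ i, P (u i) = Pi.single i 1 := by
    intro i
    have hmem : u i ∈ W := Submodule.subset_span (Set.mem_range_self i)
    have hπ : π (u i) = bu i := by
      have h1 : π (u i) = ⟨u i, hmem⟩ :=
        Submodule.linearProjOfIsCompl_apply_left hW' ⟨u i, hmem⟩
      rw [h1]
      exact Subtype.ext (congrArg Subtype.val (Module.Basis.span_apply hu i)).symm
    ext j
    simp only [P, LinearMap.pi_apply, LinearMap.comp_apply, hπ, Module.Basis.coord_apply,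
      Module.Basis.repr_self]
    simp [Finsupp.single_apply, Pi.single_apply, eq_comm]
  have hf : f u = 1 := by
    have : (fun i => P (u i)) = (1 : Matrix (Fin m) (Fin m) K) := by
      funext i j
      rw [hP i]
      simp [Matrix.one_apply, Pi.single_apply, eq_comm]
    simp only [f, AlternatingMap.compLinearMap_apply]
    rw [show (fun i => P (u i)) = ((1 : Matrix (Fin m) (Fin m) K) : Fin m → Fin m → K) from this]
    exact Matrix.det_one
  intro h0
  have hlift := ExteriorAlgebra.liftAlternating_apply_ιMulti
    (Function.update (fun k => (0 : ((Fin n → K)) [⋀^Fin k]→ₗ[K] K)) m f) u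
  rw [h0, map_zero, Function.update_self] at hlift
  rw [hf] at hlift
  exact one_ne_zero hlift.symm

end AuxLemmas

/-- For a nilpotent endomorphism `T` of `K^n` and linearly independent
vectors `v₁, …, v_ℓ` spanning `L`, one has `T(L) ⊆ L` iff for every `z : K` the ℓ-th
exterior power of `id + z • T` fixes the wedge product `v₁ ∧ ⋯ ∧ v_ℓ`. -/
theorem stmt_1 (K : Type*) [Field K] (n ℓ : ℕ)
    (T : Module.End K (Fin n → K)) (hT : T ^ n = 0)
    (v : Fin ℓ → (Fin n → K)) (hv : LinearIndependent K v)
    (L : Submodule K (Fin n → K)) (hL : Submodule.span K (Set.range v) = L) :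
    L.map T ≤ L ↔
      ∀ z : K, ExteriorAlgebra.map (1 + z • T) (ExteriorAlgebra.ιMulti K ℓ v) =
        ExteriorAlgebra.ιMulti K ℓ v := by
  classical
  subst hL
  constructor
  · intro hTL z
    set L := Submodule.span K (Set.range v) with hLdef
    have hmapT : ∀ x ∈ L, T x ∈ L := fun x hx => hTL (Submodule.mem_map_of_mem hx)
    have hmapg : ∀ x ∈ L, (1 + z • T) x ∈ L := fun x hx => by
      simpa using L.add_mem hx (L.smul_mem z (hmapT x hx))
    let e : Module.Basis (Fin ℓ) K (Submodule.span K (Set.range v)) := Module.Basis.span hv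
    have he : ∀ i, (e i : Fin n → K) = v i := fun i => congrArg Subtype.val (Module.Basis.span_apply hv i)
    let f : (↥(Submodule.span K (Set.range v))) [⋀^Fin ℓ]→ₗ[K] ExteriorAlgebra K (Fin n → K) :=
      (ExteriorAlgebra.ιMulti K ℓ).compLinearMap (Submodule.span K (Set.range v)).subtype
    have hfe : f e = ExteriorAlgebra.ιMulti K ℓ v := by
      simp only [f, AlternatingMap.compLinearMap_apply]
      congr 1
      funext i
      simpa using he i
    rw [ExteriorAlgebra.map_apply_ιMulti]
    have h2 : ExteriorAlgebra.ιMulti K ℓ (⇑(1 + z • T) ∘ v)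
        = f (⇑((1 + z • T).restrict hmapg) ∘ ⇑e) := by
      simp only [f, AlternatingMap.compLinearMap_apply]
      congr 1
      funext i
      simp [LinearMap.restrict_coe_apply, he i]
    rw [h2, alt_apply_comp_end e f _, hfe]
    have hTn : (T.restrict hmapT) ^ n = 0 := by
      rw [Module.End.pow_restrict]
      ext x
      simp only [LinearMap.restrict_coe_apply, LinearMap.zero_apply]
      rw [hT]
      simp
    have hN : ((1 + z • T).restrict hmapg) = 1 + z • (T.restrict hmapT) := by
      ext x
      simp [LinearMap.restrict_coe_apply]
    rw [hN, det_one_add_of_isNilpotent _ ⟨n, by rw [smul_pow, hTn, smul_zero]⟩, one_smul]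
  · intro h
    rw [Submodule.map_span_le]
    rintro _ ⟨i, rfl⟩
    have h1 := h 1
    rw [one_smul] at h1
    set w : Fin ℓ → (Fin n → K) := fun j => v j + T (v j) with hw
    have hmapw : ExteriorAlgebra.ιMulti K ℓ w = ExteriorAlgebra.ιMulti K ℓ v := by
      have hcw : ⇑(1 + T) ∘ v = w := by funext j; simp [w]
      rw [← h1, ExteriorAlgebra.map_apply_ιMulti, hcw]
    suffices hxi : w i ∈ Submodule.span K (Set.range v) by
      have hTv : T (v i) = w i - v i := by simp [w]
      rw [hTv]
      exact Submodule.sub_mem _ hxi (Submodule.subset_span (Set.mem_range_self i))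
    by_contra hx
    have hcons : LinearIndependent K (Fin.cons (w i) v) :=
      linearIndependent_fin_cons.mpr ⟨hv, hx⟩
    refine iMulti_ne_zero _ hcons ?_
    have hdep : ¬ LinearIndependent K (Fin.cons (w i) w) := by
      intro hli
      have h0i : (0 : Fin (ℓ + 1)) ≠ i.succ := (Fin.succ_ne_zero i).symm
      exact h0i (hli.injective (by simp))
    have hzero := AlternatingMap.map_linearDependent
      (ExteriorAlgebra.ιMulti K (ℓ + 1)) (Fin.cons (w i) w) hdep
    rw [ExteriorAlgebra.ιMulti_succ_apply] at hzero ⊢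
    have e1 : Matrix.vecTail (Fin.cons (w i) w) = w := by
      funext j; simp [Matrix.vecTail, Fin.cons_succ]
    have e2 : Matrix.vecTail (Fin.cons (w i) v) = v := by
      funext j; simp [Matrix.vecTail, Fin.cons_succ]
    rw [e1, hmapw, Fin.cons_zero] at hzero
    rw [e2, Fin.cons_zero]
    exact hzero
end

section
/- Let K be a field, T a nilpotent endomorphism of K^n, 1 ≤ ℓ ≤ n, and let v_1, …, v_ℓ be linearly independent vectors spanning the subspace L; set ω = v_1 ∧ ⋯ ∧ v_ℓ ∈ ⋀^ℓ K^n. Then T(L) ⊆ L if and only if S_i(ω) = 0 for all i = 1, …, ℓ, i.e. if and only if every shuffle equation of T vanishes at ω. In other words, the set of T-fixed points of the Grassmannian Gr(ℓ,n) is the intersection of Gr(ℓ,n) with the linear subspace of P(⋀^ℓ K^n) cut out by the shuffle equations. -/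
open Polynomial

noncomputable section

variable (K : Type*) [Field K]

/-- The type of `ℓ`-element subsets of `{1,…,n}`, indexing the standard basis of `⋀^ℓ K^n`. -/
abbrev IndexSet (n ℓ : ℕ) := {J : Finset (Fin n) // J.card = ℓ}

/-- The Plücker coordinates of an `ℓ`-tuple of vectors in `K^n`: the coordinate indexed by
an `ℓ`-subset `J` is the coefficient of the basis vector `e_J` in the expansion of the wedge
`v 0 ∧ ⋯ ∧ v (ℓ-1)` in the standard basis of `⋀^ℓ K^n`, i.e. the corresponding maximal
minor of the `ℓ × n` matrix with rows `v i`. -/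
def pluecker (n ℓ : ℕ) (v : Fin ℓ → Fin n → K) : IndexSet n ℓ → K :=
  fun J => Matrix.det (Matrix.of fun a b => v a ((J.1.orderIsoOfFin J.2) b).1)

/-- The matrix entries of the endomorphisms `S_i` of `⋀^ℓ K^n` defined by
`⋀^ℓ(id + z T) = Σ_i z^i S_i` : the entry in row `J`, column `I` is the coefficient of
`z^i` in the `(J, I)` minor of the matrix `Id + z T`.  Thus
`e_J^*(S_i ω) = Σ_I shuffleCoeff K n ℓ T i J I * ω_I`. -/
def shuffleCoeff (n ℓ : ℕ) (T : Matrix (Fin n) (Fin n) K) (i : ℕ)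
    (J I : IndexSet n ℓ) : K :=
  (Matrix.det (Matrix.of fun a b =>
    ((1 : Matrix (Fin n) (Fin n) K[X]) + (X : K[X]) • T.map Polynomial.C)
      ((J.1.orderIsoOfFin J.2) a).1 ((I.1.orderIsoOfFin I.2) b).1)).coeff i

/-- The shuffle equation of index `(i, J)`, as a linear polynomial in the Plücker
coordinates `p_I`: evaluated at `ω` it gives `e_J^*(S_i ω)`. -/
def shufflePoly (n ℓ : ℕ) (T : Matrix (Fin n) (Fin n) K) (i : ℕ) (J : IndexSet n ℓ) :
    MvPolynomial (IndexSet n ℓ) K :=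
  ∑ I : IndexSet n ℓ,
    MvPolynomial.C (shuffleCoeff K n ℓ T i J I) * MvPolynomial.X I

/-- The shuffle equation of index `(i, J)`, as a linear functional on
`⋀^ℓ K^n ≅ K^(n choose ℓ)`: it sends `ω` to `e_J^*(S_i ω)`. -/
def shuffleFunc (n ℓ : ℕ) (T : Matrix (Fin n) (Fin n) K) (i : ℕ) (J : IndexSet n ℓ) :
    (IndexSet n ℓ → K) →ₗ[K] K :=
  ∑ I : IndexSet n ℓ, shuffleCoeff K n ℓ T i J I • LinearMap.proj I

/-- The affine cone over the Grassmannian `Gr(ℓ,n)` in `⋀^ℓ K^n ≅ K^(n choose ℓ)`: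
the zero vector together with the Plücker coordinate vectors of all bases of
`ℓ`-dimensional subspaces of `K^n`. -/
def plueckerCone (n ℓ : ℕ) : Set (IndexSet n ℓ → K) :=
  {ω | ω = 0 ∨ ∃ v : Fin ℓ → Fin n → K, LinearIndependent K v ∧ ω = pluecker K n ℓ v}

/-- The affine cone over the fixed point locus `Gr(ℓ,n)^T`: the zero vector together with
the Plücker coordinate vectors of all bases of `ℓ`-dimensional `T`-invariant subspaces. -/
def plueckerConeT (n ℓ : ℕ) (T : Matrix (Fin n) (Fin n) K) : Set (IndexSet n ℓ → K) :=
  {ω | ω = 0 ∨ ∃ v : Fin ℓ → Fin n → K, LinearIndependent K v ∧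
    (Submodule.span K (Set.range v)).map T.mulVecLin ≤ Submodule.span K (Set.range v) ∧
    ω = pluecker K n ℓ v}

/-- The vanishing ideal of a subset of affine space `σ → K`, inside the polynomial ring
`K[Xₛ : s ∈ σ]`. -/
def vanishingIdeal {σ : Type*} (S : Set (σ → K)) : Ideal (MvPolynomial σ K) where
  carrier := {p | ∀ x ∈ S, MvPolynomial.eval x p = 0}
  zero_mem' := by intro x hx; simp
  add_mem' := by intro p q hp hq x hx; simp [hp x hx, hq x hx]
  smul_mem' := by intro c p hp x hx; simp [smul_eq_mul, hp x hx]

open scoped Classical in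
/-- The matrix (in the standard basis, acting on column vectors) of the nilpotent Jordan
endomorphism `T_λ` of `K^n` attached to a partition `λ` (encoded as a list `l`):
it sends `e_j ↦ e_{j+1}` for every `j ∈ {1,…,n}` which is not one of the partial sums
`λ_1 + ⋯ + λ_i`, and `e_j ↦ 0` for `j` among these partial sums. -/
def jordanMatrix (n : ℕ) (l : List ℕ) : Matrix (Fin n) (Fin n) K :=
  Matrix.of fun i j =>
    if (i : ℕ) = (j : ℕ) + 1 ∧ ∀ k, (l.take k).sum ≠ (j : ℕ) + 1 then 1 else 0

end

namespace ShuffleAux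

open Matrix Finset Polynomial

variable {R : Type*} [CommRing R] {m n : ℕ}

def emb {n m : ℕ} (J : IndexSet n m) : Fin m → Fin n :=
  fun b => ((J.1.orderIsoOfFin J.2) b : Fin n)

lemma emb_eq (J : IndexSet n m) : emb J = J.1.orderEmbOfFin J.2 := by
  funext b; exact Finset.coe_orderIsoOfFin_apply _ _ _

lemma emb_strictMono (J : IndexSet n m) : StrictMono (emb J) := by
  rw [emb_eq]; exact (J.1.orderEmbOfFin J.2).strictMono

lemma emb_mem (J : IndexSet n m) (b : Fin m) : emb J b ∈ J.1 := by
  rw [emb_eq]; exact Finset.orderEmbOfFin_mem _ _ _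

def toIndex (r : Fin m → Fin n) (hr : Function.Injective r) : IndexSet n m :=
  ⟨Finset.image r Finset.univ, by
    rw [Finset.card_image_of_injective _ hr, Finset.card_univ, Fintype.card_fin]⟩

lemma mem_toIndex (r : Fin m → Fin n) (hr : Function.Injective r) (x : Fin m) :
    r x ∈ (toIndex r hr).1 := by
  simp [toIndex]

noncomputable def toPerm (r : Fin m → Fin n) (hr : Function.Injective r) : Equiv.Perm (Fin m) :=
  Equiv.ofBijective
    (fun x => ((toIndex r hr).1.orderIsoOfFin (toIndex r hr).2).symm ⟨r x, mem_toIndex r hr x⟩)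
    (Finite.injective_iff_bijective.mp (fun a b hab => by
      apply hr
      have := congrArg (fun y => (((toIndex r hr).1.orderIsoOfFin (toIndex r hr).2) y : Fin n)) hab
      simpa using this))

lemma emb_toIndex_toPerm (r : Fin m → Fin n) (hr : Function.Injective r) (x : Fin m) :
    emb (toIndex r hr) (toPerm r hr x) = r x := by
  simp only [emb, toPerm, Equiv.ofBijective_apply, OrderIso.apply_symm_apply]

lemma toIndex_emb (J : IndexSet n m) (σ : Equiv.Perm (Fin m))
    (h : Function.Injective (emb J ∘ σ)) : toIndex (emb J ∘ σ) h = J := by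
  apply Subtype.ext
  ext x
  simp only [toIndex, Finset.mem_image, Finset.mem_univ, true_and, Function.comp]
  constructor
  · rintro ⟨y, rfl⟩; exact emb_mem J (σ y)
  · intro hx
    refine ⟨σ.symm ((J.1.orderIsoOfFin J.2).symm ⟨x, hx⟩), ?_⟩
    simp [emb]

lemma toPerm_emb (J : IndexSet n m) (σ : Equiv.Perm (Fin m))
    (h : Function.Injective (emb J ∘ σ)) : toPerm (emb J ∘ σ) h = σ := by
  apply Equiv.ext
  intro x
  have h1 := emb_toIndex_toPerm (emb J ∘ σ) h x
  rw [toIndex_emb J σ h] at h1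
  exact (emb_strictMono J).injective h1

lemma cauchyBinet (A : Matrix (Fin m) (Fin n) R) (B : Matrix (Fin n) (Fin m) R) :
    (A * B).det = ∑ J : IndexSet n m, (A.submatrix id (emb J)).det * (B.submatrix (emb J) id).det := by
  classical
  have h1 : (A * B).det = ∑ r : Fin m → Fin n, (∏ i, A i (r i)) • (B.submatrix r id).det := by
    have hAB : (A * B) = Matrix.of (fun i => ∑ j, A i j • B j) := by
      ext i k
      simp [Matrix.mul_apply, Finset.sum_apply]
    rw [hAB]
    calc (Matrix.detRowAlternating : (Fin m → R) [⋀^Fin m]→ₗ[R] R).toMultilinearMap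
          (fun i => ∑ j, A i j • B j)
        = ∑ r : Fin m → Fin n, (Matrix.detRowAlternating :
            (Fin m → R) [⋀^Fin m]→ₗ[R] R).toMultilinearMap (fun i => A i (r i) • B (r i)) := by
          exact (Matrix.detRowAlternating :
            (Fin m → R) [⋀^Fin m]→ₗ[R] R).toMultilinearMap.map_sum (g := fun i j => A i j • B j)
      _ = ∑ r : Fin m → Fin n, (∏ i, A i (r i)) • (B.submatrix r id).det := by
          refine Finset.sum_congr rfl fun r _ => ?_
          exact (Matrix.detRowAlternating : (Fin m → R) [⋀^Fin m]→ₗ[R] R).toMultilinearMap.map_smul_univ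
            (fun i => A i (r i)) (fun i => B (r i))
  rw [h1]
  rw [← Finset.sum_filter_add_sum_filter_not Finset.univ (fun r : Fin m → Fin n => Function.Injective r)]
  have h2 : ∑ r ∈ Finset.univ.filter (fun r : Fin m → Fin n => ¬ Function.Injective r),
      (∏ i, A i (r i)) • (B.submatrix r id).det = 0 := by
    refine Finset.sum_eq_zero fun r hr => ?_
    rw [Finset.mem_filter] at hr
    obtain ⟨i, j, hij, hne⟩ : ∃ i j, r i = r j ∧ i ≠ j := by
      simpa [Function.Injective] using hr.2
    have hz : (B.submatrix r id).det = 0 :=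
      Matrix.det_zero_of_row_eq hne (by funext k; simp [Matrix.submatrix_apply, hij])
    rw [hz, smul_zero]
  rw [h2, add_zero]
  have h4 : ∑ r ∈ Finset.univ.filter (fun r : Fin m → Fin n => Function.Injective r),
      (∏ i, A i (r i)) • (B.submatrix r id).det
      = ∑ p : (IndexSet n m) × Equiv.Perm (Fin m),
          (∏ i, A i (emb p.1 (p.2 i))) • (B.submatrix (emb p.1 ∘ p.2) id).det := by
    refine Finset.sum_bij'
      (i := fun r hr => (toIndex r (Finset.mem_filter.mp hr).2, toPerm r (Finset.mem_filter.mp hr).2))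
      (j := fun p _ => emb p.1 ∘ p.2) ?_ ?_ ?_ ?_ ?_
    · exact fun r hr => Finset.mem_univ _
    · exact fun p hp => Finset.mem_filter.mpr ⟨Finset.mem_univ _,
        ((emb_strictMono p.1).injective).comp p.2.injective⟩
    · intro r hr; funext x; exact emb_toIndex_toPerm _ _ x
    · intro p hp
      have hinj : Function.Injective (emb p.1 ∘ p.2) :=
        ((emb_strictMono p.1).injective).comp p.2.injective
      exact Prod.ext (toIndex_emb p.1 p.2 hinj) (toPerm_emb p.1 p.2 hinj)
    · intro r hr
      have hre : emb (toIndex r (Finset.mem_filter.mp hr).2)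
          ∘ ⇑(toPerm r (Finset.mem_filter.mp hr).2) = r := funext (emb_toIndex_toPerm _ _)
      simp only [emb_toIndex_toPerm, hre]
  rw [h4, Fintype.sum_prod_type]
  refine Finset.sum_congr rfl fun J _ => ?_
  have hperm : ∀ σ : Equiv.Perm (Fin m), (B.submatrix (emb J ∘ σ) id).det
      = (Equiv.Perm.sign σ : ℤ) * (B.submatrix (emb J) id).det := by
    intro σ
    have : B.submatrix (emb J ∘ σ) id = (B.submatrix (emb J) id).submatrix σ id := by
      ext i k; simp [Matrix.submatrix_apply]
    rw [this, Matrix.det_permute]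
  have hdet : (A.submatrix id (emb J)).det
      = ∑ σ : Equiv.Perm (Fin m), (Equiv.Perm.sign σ : ℤ) * ∏ i, A i (emb J (σ i)) := by
    rw [← Matrix.det_transpose, Matrix.det_apply']
    refine Finset.sum_congr rfl fun σ _ => ?_
    simp [Matrix.transpose_apply, Matrix.submatrix_apply]
  rw [hdet, Finset.sum_mul]
  refine Finset.sum_congr rfl fun σ _ => ?_
  rw [hperm σ, smul_eq_mul]
  ring

lemma det_snoc_lapl (r : Fin m → Fin n → R) (z : Fin n → R) (J : IndexSet n (m+1)) :
    Matrix.det (Matrix.of fun a b => (Fin.snoc r z : Fin (m+1) → Fin n → R) a (emb J b))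
      = ∑ b : Fin (m+1), (-1) ^ (m + (b : ℕ)) * z (emb J b) *
          Matrix.det (Matrix.of fun a c => r a (emb J (b.succAbove c))) := by
  rw [Matrix.det_succ_row _ (Fin.last m)]
  refine Finset.sum_congr rfl fun b _ => ?_
  have hsub : ((Matrix.of fun a b => (Fin.snoc r z : Fin (m+1) → Fin n → R) a
        (emb J b)).submatrix (Fin.last m).succAbove b.succAbove)
      = Matrix.of fun a c => r a (emb J (b.succAbove c)) := by
    ext a c
    simp [Matrix.submatrix_apply, Fin.succAbove_last, Fin.snoc_castSucc]
  rw [hsub]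
  simp [Fin.snoc_last, Fin.val_last]

lemma det_cols_congr (f g : Fin m → Fin n → R)
    (h : ∀ J : IndexSet n m, Matrix.det (Matrix.of fun a b => f a (emb J b))
        = Matrix.det (Matrix.of fun a b => g a (emb J b)))
    (c : Fin m → Fin n) (hc : StrictMono c) :
    Matrix.det (Matrix.of fun a b => f a (c b)) = Matrix.det (Matrix.of fun a b => g a (c b)) := by
  classical
  have hcard : (Finset.univ.image c).card = m := by
    rw [Finset.card_image_of_injective _ hc.injective, Finset.card_univ, Fintype.card_fin]
  have hc' : emb ⟨Finset.univ.image c, hcard⟩ = c := by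
    rw [emb_eq]
    exact (Finset.orderEmbOfFin_unique hcard
      (fun x => Finset.mem_image_of_mem _ (Finset.mem_univ x)) hc).symm
  have hJ := h ⟨Finset.univ.image c, hcard⟩
  rw [hc'] at hJ
  exact hJ

section Field

variable {F : Type*} [Field F]

lemma exists_minor_ne_zero (v : Fin m → Fin n → F) (hv : LinearIndependent F v) :
    ∃ J : IndexSet n m, Matrix.det (Matrix.of fun a b => v a (emb J b)) ≠ 0 := by
  classical
  set V : Matrix (Fin m) (Fin n) F := Matrix.of v with hV
  have hrank : V.rank = m := by
    have : LinearIndependent F V := hv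
    rw [this.rank_matrix, Fintype.card_fin]
  have hspan : Submodule.span F (Set.range Vᵀ) = ⊤ := by
    apply Submodule.eq_top_of_finrank_eq
    rw [show Set.range Vᵀ = Set.range V.col from rfl, ← Matrix.rank_eq_finrank_span_cols, hrank]
    simp [Module.finrank_pi]
  obtain ⟨s, hs_sub, hs_span, hs_ind⟩ := exists_linearIndependent F (Set.range Vᵀ)
  rw [hspan] at hs_span
  have hs_fin : s.Finite := Set.Finite.subset (Set.finite_range Vᵀ) hs_sub
  haveI : Fintype s := hs_fin.fintype
  have hb : Fintype.card s = m := by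
    have hbasis : Module.Basis s F (Fin m → F) := Module.Basis.mk hs_ind (by rw [Subtype.range_coe, hs_span])
    rw [← Module.finrank_eq_card_basis hbasis]
    simp [Module.finrank_pi]
  have hchoice : ∀ x : s, ∃ j : Fin n, Vᵀ j = (x : Fin m → F) := fun x => hs_sub x.2
  choose g hg using hchoice
  have hginj : Function.Injective g := by
    intro x y hxy
    apply Subtype.ext
    rw [← hg x, ← hg y, hxy]
  have hcard : (Finset.univ.image g).card = m := by
    rw [Finset.card_image_of_injective _ hginj, Finset.card_univ, hb]
  set J : IndexSet n m := ⟨Finset.univ.image g, hcard⟩ with hJ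
  refine ⟨J, ?_⟩
  have hmem : ∀ b : Fin m, ∃ x : s, g x = emb J b := by
    intro b
    have := emb_mem J b
    rw [hJ] at this
    simpa using this
  choose h hh using hmem
  have hcol : ∀ b : Fin m, Vᵀ (emb J b) = (h b : Fin m → F) := by
    intro b
    rw [← hh b, hg]
  have hinj : Function.Injective h := by
    intro b1 b2 hb12
    have : emb J b1 = emb J b2 := by rw [← hh b1, ← hh b2, hb12]
    exact (emb_strictMono J).injective this
  have hindep : LinearIndependent F (fun b : Fin m => Vᵀ (emb J b)) := by
    have : (fun b : Fin m => Vᵀ (emb J b)) = (fun x : s => (x : Fin m → F)) ∘ h := by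
      funext b; rw [hcol b]; rfl
    rw [this]
    exact hs_ind.comp h hinj
  have hunit : IsUnit (Matrix.of fun a b => v a (emb J b)) := by
    rw [← Matrix.linearIndependent_cols_iff_isUnit]
    convert hindep using 1
    rfl
  exact ((Matrix.isUnit_iff_isUnit_det _).mp hunit).ne_zero

lemma mem_span_of_minors (v : Fin m → Fin n → F) (hv : LinearIndependent F v) (u : Fin n → F)
    (h : ∀ J : IndexSet n (m + 1),
      Matrix.det (Matrix.of fun a b => (Fin.snoc v u : Fin (m+1) → Fin n → F) a (emb J b)) = 0) :
    u ∈ Submodule.span F (Set.range v) := by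
  by_contra hu
  have hsnoc : LinearIndependent F (Fin.snoc v u : Fin (m+1) → Fin n → F) :=
    linearIndependent_fin_snoc.mpr ⟨hv, hu⟩
  obtain ⟨J, hJ⟩ := exists_minor_ne_zero _ hsnoc
  exact hJ (h J)

end Field

end ShuffleAux

namespace ShuffleAux

open Matrix Finset Polynomial

variable {K : Type*} [Field K] {n ℓ : ℕ}

/-- The matrix `Id + z T` over `K[z]`. -/
noncomputable def Mz (T : Matrix (Fin n) (Fin n) K) : Matrix (Fin n) (Fin n) K[X] :=
  (1 : Matrix (Fin n) (Fin n) K[X]) + (X : K[X]) • T.map Polynomial.C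

/-- The rows `(Id + zT) vₐ`. -/
noncomputable def Wrow (T : Matrix (Fin n) (Fin n) K) (v : Fin ℓ → Fin n → K) :
    Fin ℓ → Fin n → K[X] :=
  fun a j => Polynomial.C (v a j) + X * Polynomial.C (T.mulVec (v a) j)

/-- The `J`-th Plücker coordinate of the family `(Id + zT) vₐ`. -/
noncomputable def Pz (T : Matrix (Fin n) (Fin n) K) (v : Fin ℓ → Fin n → K)
    (J : IndexSet n ℓ) : K[X] :=
  Matrix.det (Matrix.of fun a b => Wrow T v a (emb J b))

lemma mz_mul (T : Matrix (Fin n) (Fin n) K) (v : Fin ℓ → Fin n → K) (a : Fin ℓ) (j : Fin n) :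
    ∑ k, Mz T j k * Polynomial.C (v a k) = Wrow T v a j := by
  classical
  simp only [Mz, Wrow, Matrix.add_apply, Matrix.smul_apply, Matrix.map_apply, Matrix.one_apply,
    smul_eq_mul, add_mul]
  rw [Finset.sum_add_distrib]
  congr 1
  · simp [ite_mul]
  · rw [Matrix.mulVec, dotProduct, map_sum, Finset.mul_sum]
    refine Finset.sum_congr rfl fun k _ => by rw [_root_.map_mul]; ring

lemma pluecker_eq (v : Fin ℓ → Fin n → K) (J : IndexSet n ℓ) :
    pluecker K n ℓ v J = Matrix.det (Matrix.of fun a b => v a (emb J b)) := rfl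

lemma shuffleCoeff_eq (T : Matrix (Fin n) (Fin n) K) (i : ℕ) (J I : IndexSet n ℓ) :
    shuffleCoeff K n ℓ T i J I
      = (Matrix.det (Matrix.of fun a b => Mz T (emb J a) (emb I b))).coeff i := rfl

lemma det_map_C {m : ℕ} (g : Fin m → Fin m → K) :
    Matrix.det (Matrix.of fun a b => Polynomial.C (g a b))
      = Polynomial.C (Matrix.det (Matrix.of g)) := by
  rw [RingHom.map_det]
  rfl

/-- Cauchy–Binet: expansion of `Pz` in terms of shuffle minors and Plücker coordinates. -/
lemma pz_eq_sum (T : Matrix (Fin n) (Fin n) K) (v : Fin ℓ → Fin n → K) (J : IndexSet n ℓ) :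
    Pz T v J = ∑ I : IndexSet n ℓ,
      (Matrix.det (Matrix.of fun a b => Mz T (emb J a) (emb I b))) * Polynomial.C (pluecker K n ℓ v I) := by
  classical
  have hAB : (Matrix.of fun a b => Wrow T v a (emb J b))
      = ((Matrix.of fun (b : Fin ℓ) (k : Fin n) => Mz T (emb J b) k)
          * (Matrix.of fun (k : Fin n) (a : Fin ℓ) => Polynomial.C (v a k)))ᵀ := by
    apply Matrix.ext
    intro a b
    simp only [Matrix.transpose_apply, Matrix.mul_apply, Matrix.of_apply]
    exact (mz_mul T v a (emb J b)).symm
  rw [Pz, hAB, Matrix.det_transpose, cauchyBinet]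
  refine Finset.sum_congr rfl fun I _ => ?_
  have h1 : ((Matrix.of fun (b : Fin ℓ) (k : Fin n) => Mz T (emb J b) k).submatrix id (emb I))
      = Matrix.of fun a b => Mz T (emb J a) (emb I b) := rfl
  have h2 : ((Matrix.of fun (k : Fin n) (a : Fin ℓ) => Polynomial.C (v a k)).submatrix (emb I) id)
      = (Matrix.of fun a b => Polynomial.C (v a (emb I b)))ᵀ := rfl
  rw [h1, h2, Matrix.det_transpose, det_map_C, pluecker_eq]

lemma pz_coeff (T : Matrix (Fin n) (Fin n) K) (v : Fin ℓ → Fin n → K) (i : ℕ) (J : IndexSet n ℓ) :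
    (Pz T v J).coeff i
      = ∑ I : IndexSet n ℓ, shuffleCoeff K n ℓ T i J I * pluecker K n ℓ v I := by
  rw [pz_eq_sum, Polynomial.finset_sum_coeff]
  refine Finset.sum_congr rfl fun I _ => ?_
  rw [Polynomial.coeff_mul_C, shuffleCoeff_eq]

lemma pz_coeff_zero (T : Matrix (Fin n) (Fin n) K) (v : Fin ℓ → Fin n → K) (J : IndexSet n ℓ) :
    (Pz T v J).coeff 0 = pluecker K n ℓ v J := by
  rw [Polynomial.coeff_zero_eq_eval_zero]
  have : Polynomial.eval 0 (Pz T v J) = (Polynomial.evalRingHom (0:K)) (Pz T v J) := rfl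
  rw [this, Pz, RingHom.map_det]
  rw [pluecker_eq]
  congr 1
  ext a b
  simp [Wrow, Matrix.map_apply]

lemma pz_natDegree_le (T : Matrix (Fin n) (Fin n) K) (v : Fin ℓ → Fin n → K) (J : IndexSet n ℓ) :
    (Pz T v J).natDegree ≤ ℓ := by
  rw [Pz, Matrix.det_apply']
  refine Polynomial.natDegree_sum_le_of_forall_le _ _ fun σ _ => ?_
  refine (Polynomial.natDegree_mul_le).trans ?_
  have h1 : (Equiv.Perm.sign σ : K[X]).natDegree = 0 := by
    rcases Int.units_eq_one_or (Equiv.Perm.sign σ) with h | h <;> simp [h]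
  rw [h1, zero_add]
  refine (Polynomial.natDegree_prod_le _ _).trans ?_
  have : ∀ a : Fin ℓ, ((Matrix.of fun a b => Wrow T v a (emb J b)) (σ a) a).natDegree ≤ 1 := by
    intro a
    simp only [Matrix.of_apply, Wrow]
    refine (Polynomial.natDegree_add_le _ _).trans (max_le (by simp) ?_)
    refine (Polynomial.natDegree_mul_le).trans ?_
    simp [Polynomial.natDegree_X_le]
  calc ∑ a, ((Matrix.of fun a b => Wrow T v a (emb J b)) (σ a) a).natDegree
      ≤ ∑ _a : Fin ℓ, 1 := Finset.sum_le_sum fun a _ => this a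
    _ = ℓ := by simp

end ShuffleAux

namespace ShuffleAux

open Matrix Finset Polynomial

variable {K : Type*} [Field K] {n ℓ : ℕ}

lemma pz_eq_C_of_invariant (T : Matrix (Fin n) (Fin n) K) (hT : T ^ n = 0)
    (v : Fin ℓ → Fin n → K) (hv : LinearIndependent K v)
    (hTL : ∀ a, T.mulVec (v a) ∈ Submodule.span K (Set.range v)) (J : IndexSet n ℓ) :
    Pz T v J = Polynomial.C (pluecker K n ℓ v J) := by
  classical
  choose cf hcf using fun a => (Submodule.mem_span_range_iff_exists_fun K).mp (hTL a)
  set c : Matrix (Fin ℓ) (Fin ℓ) K := Matrix.of cf with hc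
  have hpow : ∀ (k : ℕ) (a : Fin ℓ), (T ^ k).mulVec (v a) = ∑ b, (c ^ k) a b • v b := by
    intro k
    induction k with
    | zero =>
      intro a
      rw [pow_zero, pow_zero, Matrix.one_mulVec]
      simp [Matrix.one_apply, ite_smul]
    | succ k ih =>
      intro a
      rw [pow_succ, ← Matrix.mulVec_mulVec, ← hcf a]
      have hlin : (T ^ k) *ᵥ (∑ b, cf a b • v b) = ∑ b, cf a b • ((T ^ k) *ᵥ v b) := by
        simp only [← Matrix.mulVecLin_apply, map_sum]
        exact Finset.sum_congr rfl fun b _ => (T ^ k).mulVecLin.map_smul _ _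
      rw [hlin]
      simp_rw [ih]
      rw [pow_succ']
      simp only [Finset.smul_sum, smul_smul]
      rw [Finset.sum_comm]
      refine Finset.sum_congr rfl fun d _ => ?_
      rw [← Finset.sum_smul, Matrix.mul_apply]
      rfl
  have hcn : c ^ n = 0 := by
    apply Matrix.ext
    intro a b
    have h0 := hpow n a
    rw [hT, Matrix.zero_mulVec] at h0
    have hz := Fintype.linearIndependent_iff.mp hv (fun b => (c ^ n) a b) h0.symm
    simpa using hz b
  have hmap : (c.map (Polynomial.C : K → K[X])) ^ n = 0 := by
    have hmp := map_pow (Polynomial.C.mapMatrix :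
      Matrix (Fin ℓ) (Fin ℓ) K →+* Matrix (Fin ℓ) (Fin ℓ) K[X]) c n
    rw [RingHom.mapMatrix_apply, RingHom.mapMatrix_apply, hcn] at hmp
    rw [← hmp]
    apply Matrix.ext
    intro a b
    simp
  have hnil : IsNilpotent ((X : K[X]) • c.map Polynomial.C) :=
    ⟨n, by rw [_root_.smul_pow, hmap, smul_zero]⟩
  have hdet1 : Matrix.det (1 + (X : K[X]) • c.map Polynomial.C) = 1 := by
    have hunit : IsUnit (1 + (X : K[X]) • c.map Polynomial.C) := hnil.isUnit_one_add
    have hud := (Matrix.isUnit_iff_isUnit_det _).mp hunit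
    obtain ⟨r, hr, hCr⟩ := Polynomial.isUnit_iff.mp hud
    have heval : (Polynomial.evalRingHom (0 : K))
        ((1 + (X : K[X]) • c.map Polynomial.C).det) = 1 := by
      rw [RingHom.map_det, RingHom.mapMatrix_apply]
      have hone : (1 + (X : K[X]) • c.map Polynomial.C).map (Polynomial.evalRingHom (0 : K)) = 1 := by
        apply Matrix.ext
        intro a b
        simp [Matrix.map_apply, Matrix.add_apply, Matrix.smul_apply, Matrix.one_apply, apply_ite]
      rw [hone, Matrix.det_one]
    rw [← hCr] at heval ⊢
    rw [Polynomial.coe_evalRingHom, Polynomial.eval_C] at heval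
    rw [heval]
    exact Polynomial.C_1
  have hW : (Matrix.of fun a b => Wrow T v a (emb J b))
      = (1 + (X : K[X]) • c.map Polynomial.C)
        * (Matrix.of fun (b : Fin ℓ) bb => Polynomial.C (v b (emb J bb))) := by
    apply Matrix.ext
    intro a bb
    rw [Matrix.mul_apply]
    simp only [Matrix.add_apply, Matrix.smul_apply, Matrix.map_apply, Matrix.one_apply,
      smul_eq_mul, add_mul, Matrix.of_apply]
    rw [Finset.sum_add_distrib]
    have hTv : T.mulVec (v a) (emb J bb) = ∑ b, cf a b * v b (emb J bb) := by
      rw [← hcf a]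
      simp [Finset.sum_apply]
    rw [Wrow]
    congr 1
    · simp [ite_mul]
    · rw [hTv, map_sum, Finset.mul_sum]
      refine Finset.sum_congr rfl fun b _ => ?_
      rw [_root_.map_mul, show (c : Matrix (Fin ℓ) (Fin ℓ) K) a b = cf a b from rfl]
      ring
  rw [Pz, hW, Matrix.det_mul, hdet1, one_mul, det_map_C, pluecker_eq]

end ShuffleAux



/-- For a nilpotent endomorphism `T` of `K^n` and linearly independent
vectors `v₁,…,v_ℓ` spanning `L`, with `ω = v₁ ∧ ⋯ ∧ v_ℓ`, one has `T(L) ⊆ L` iff every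
shuffle equation of `T` vanishes at `ω`, i.e. `e_J^*(S_i ω) = 0` for all `1 ≤ i ≤ ℓ`
and all `ℓ`-subsets `J`. -/
theorem stmt_3 (K : Type*) [Field K] (n ℓ : ℕ) (h1 : 1 ≤ ℓ) (h2 : ℓ ≤ n)
    (T : Matrix (Fin n) (Fin n) K) (hT : T ^ n = 0)
    (v : Fin ℓ → Fin n → K) (hv : LinearIndependent K v)
    (L : Submodule K (Fin n → K)) (hL : Submodule.span K (Set.range v) = L) :
    L.map T.mulVecLin ≤ L ↔
      ∀ i : ℕ, 1 ≤ i → i ≤ ℓ → ∀ J : IndexSet n ℓ,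
        ∑ I : IndexSet n ℓ, shuffleCoeff K n ℓ T i J I * pluecker K n ℓ v I = 0 := by
  classical
  constructor
  · intro hTL i hi1 hi2 J
    have hTL' : ∀ a, T.mulVec (v a) ∈ Submodule.span K (Set.range v) := by
      intro a
      have hva : v a ∈ L := by rw [← hL]; exact Submodule.subset_span ⟨a, rfl⟩
      have hx : T.mulVecLin (v a) ∈ L.map T.mulVecLin := Submodule.mem_map_of_mem hva
      have hmem := hTL hx
      rw [← hL] at hmem
      simpa [Matrix.mulVecLin_apply] using hmem
    have hP := ShuffleAux.pz_eq_C_of_invariant T hT v hv hTL' J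
    have hco := congrArg (fun p => Polynomial.coeff p i) hP
    rw [ShuffleAux.pz_coeff] at hco
    rw [hco, Polynomial.coeff_C, if_neg (by omega)]
  · intro hsh
    have hPC : ∀ J : IndexSet n ℓ,
        ShuffleAux.Pz T v J = Polynomial.C (pluecker K n ℓ v J) := by
      intro J
      apply Polynomial.ext
      intro i
      rcases Nat.eq_zero_or_pos i with h0 | hpos
      · rw [h0, ShuffleAux.pz_coeff_zero, Polynomial.coeff_C, if_pos rfl]
      · rw [Polynomial.coeff_C, if_neg (by omega)]
        rcases le_or_gt i ℓ with hle | hlt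
        · rw [ShuffleAux.pz_coeff]; exact hsh i hpos hle J
        · exact Polynomial.coeff_eq_zero_of_natDegree_lt
            (lt_of_le_of_lt (ShuffleAux.pz_natDegree_le T v J) hlt)
    have hWC : ∀ J : IndexSet n ℓ,
        Matrix.det (Matrix.of fun a b => ShuffleAux.Wrow T v a (ShuffleAux.emb J b))
          = Matrix.det (Matrix.of fun a b => Polynomial.C (v a (ShuffleAux.emb J b))) := by
      intro J
      have h1 : Matrix.det (Matrix.of fun a b => ShuffleAux.Wrow T v a (ShuffleAux.emb J b))
          = ShuffleAux.Pz T v J := rfl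
      rw [h1, hPC J, ShuffleAux.det_map_C, ShuffleAux.pluecker_eq]
    have hmin : ∀ (cmap : Fin ℓ → Fin n), StrictMono cmap →
        Matrix.det (Matrix.of fun a b => ShuffleAux.Wrow T v a (cmap b))
          = Polynomial.C (Matrix.det (Matrix.of fun a b => v a (cmap b))) := by
      intro cmap hcm
      have h2 := ShuffleAux.det_cols_congr (ShuffleAux.Wrow T v)
        (fun a j => Polynomial.C (v a j)) hWC cmap hcm
      rw [h2, ShuffleAux.det_map_C]
    rw [← hL, Submodule.map_span, Submodule.span_le]
    intro x hx
    obtain ⟨y, hy, rfl⟩ := hx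
    obtain ⟨a0, rfl⟩ := hy
    simp only [SetLike.mem_coe, Matrix.mulVecLin_apply]
    set u : Fin n → K := T.mulVec (v a0) with hu
    apply ShuffleAux.mem_span_of_minors v hv
    intro J'
    set md : Fin (ℓ+1) → K := fun b =>
      Matrix.det (Matrix.of fun a c => v a (ShuffleAux.emb J' (b.succAbove c))) with hmd
    have hzero : Matrix.det (Matrix.of fun a b =>
        (Fin.snoc (ShuffleAux.Wrow T v) (ShuffleAux.Wrow T v a0) :
          Fin (ℓ+1) → Fin n → K[X]) a (ShuffleAux.emb J' b)) = 0 := by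
      apply Matrix.det_zero_of_row_eq (i := Fin.castSucc a0) (j := Fin.last ℓ)
        (Fin.castSucc_lt_last a0).ne
      funext b
      simp [Fin.snoc_castSucc, Fin.snoc_last]
    have hlap := ShuffleAux.det_snoc_lapl (ShuffleAux.Wrow T v) (ShuffleAux.Wrow T v a0) J'
    rw [hzero] at hlap
    have hterm : ∀ b : Fin (ℓ+1),
        Matrix.det (Matrix.of fun a c => ShuffleAux.Wrow T v a (ShuffleAux.emb J' (b.succAbove c)))
          = Polynomial.C (md b) := by
      intro b
      exact hmin _ ((ShuffleAux.emb_strictMono J').comp (Fin.strictMono_succAbove b))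
    have hzero2 : (0 : K[X]) = ∑ b : Fin (ℓ+1),
        (Polynomial.C ((-1:K)^(ℓ+(b:ℕ)) * v a0 (ShuffleAux.emb J' b) * md b)
          + X * Polynomial.C ((-1:K)^(ℓ+(b:ℕ)) * u (ShuffleAux.emb J' b) * md b)) := by
      rw [hlap]
      refine Finset.sum_congr rfl fun b _ => ?_
      rw [hterm b]
      show (-1)^(ℓ+(b:ℕ)) * (Polynomial.C (v a0 (ShuffleAux.emb J' b))
          + X * Polynomial.C (u (ShuffleAux.emb J' b))) * Polynomial.C (md b) = _
      simp only [_root_.map_mul, map_pow, map_neg, _root_.map_one]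
      ring
    have hS2 := congrArg (fun p => Polynomial.coeff p 1) hzero2
    simp only [Polynomial.finset_sum_coeff, Polynomial.coeff_add, Polynomial.coeff_C,
      Polynomial.coeff_X_mul, Polynomial.coeff_zero, one_ne_zero, if_false, zero_add] at hS2
    rw [ShuffleAux.det_snoc_lapl v u J']
    exact hS2.symm
end

section
/- Let K be a field, λ a partition of n, T = T_λ the associated nilpotent Jordan endomorphism of K^n, and β the non-degenerate symmetric bilinear form on K^n with Gram matrix B_λ in the standard basis. For every subspace L of K^n with T(L) ⊆ L, the orthogonal complement L^⊥ with respect to β satisfies T(L^⊥) ⊆ L^⊥, dim L^⊥ = n − dim L, and (L^⊥)^⊥ = L. Consequently, for every 0 ≤ ℓ ≤ n the map L ↦ L^⊥ is a bijection from the set of ℓ-dimensional T-fixed subspaces of K^n onto the set of (n−ℓ)-dimensional T-fixed subspaces of K^n. -/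
open Matrix

noncomputable section

variable (K : Type*) [Field K]

open scoped Classical in
/-- The block-diagonal matrix `B_λ` of a partition `λ` (encoded as a list `l`): its `k`-th
diagonal block is the `λ_k × λ_k` matrix with ones on the antidiagonal. -/
def blockB (n : ℕ) (l : List ℕ) : Matrix (Fin n) (Fin n) K :=
  Matrix.of fun i j =>
    if ∃ k : Fin l.length,
        (l.take (k : ℕ)).sum ≤ (i : ℕ) ∧ (i : ℕ) < (l.take (k : ℕ)).sum + l.get k ∧
        (i : ℕ) + (j : ℕ) + 1 = 2 * (l.take (k : ℕ)).sum + l.get k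
      then 1 else 0

/-- The orthogonal complement of a subspace `L` of `K^n` with respect to the bilinear form
`β(u, v) = uᵀ B v` with Gram matrix `B`: the subspace `{v | β(u, v) = 0 for all u ∈ L}`. -/
def perp (n : ℕ) (B : Matrix (Fin n) (Fin n) K) (L : Submodule K (Fin n → K)) :
    Submodule K (Fin n → K) where
  carrier := {v | ∀ u ∈ L, dotProduct u (B.mulVec v) = 0}
  zero_mem' := by intro u hu; simp
  add_mem' := by
    intro a b ha hb u hu
    simp [Matrix.mulVec_add, dotProduct_add, ha u hu, hb u hu]
  smul_mem' := by
    intro c a ha u hu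
    simp [Matrix.mulVec_smul, dotProduct_smul, ha u hu]

/-! ### Auxiliary lemmas -/

section Aux

variable {l : List ℕ}

lemma stmt6_t_mono {a b : ℕ} (hab : a ≤ b) : (l.take a).sum ≤ (l.take b).sum := by
  calc (l.take a).sum = ((l.take b).take a).sum := by
        rw [List.take_take, Nat.min_eq_left hab]
    _ ≤ ((l.take b).take a).sum + ((l.take b).drop a).sum := Nat.le_add_right _ _
    _ = (l.take b).sum := by rw [← List.sum_append, List.take_append_drop]

lemma stmt6_t_le_sum (r : ℕ) : (l.take r).sum ≤ l.sum := by
  conv_rhs => rw [← List.take_append_drop r l]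
  rw [List.sum_append]; exact Nat.le_add_right _ _

lemma stmt6_t_succ {k : ℕ} (hk : k < l.length) :
    (l.take (k + 1)).sum = (l.take k).sum + l.get ⟨k, hk⟩ := by
  rw [List.sum_take_succ _ _ hk]
  simp [List.get_eq_getElem]

lemma stmt6_exists_block {n : ℕ} (hsum : l.sum = n) {i : ℕ} (hi : i < n) :
    ∃ k : Fin l.length, (l.take (k : ℕ)).sum ≤ i ∧ i < (l.take (k : ℕ)).sum + l.get k := by
  set k0 := Nat.findGreatest (fun k => (l.take k).sum ≤ i) l.length with hk0def
  have h0 : (l.take 0).sum ≤ i := by simp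
  have hk0P : (l.take k0).sum ≤ i :=
    Nat.findGreatest_spec (P := fun k => (l.take k).sum ≤ i) (Nat.zero_le _) h0
  have hk0le : k0 ≤ l.length := Nat.findGreatest_le _
  have hk0lt : k0 < l.length := by
    rcases lt_or_eq_of_le hk0le with h | h
    · exact h
    · exfalso
      rw [h, List.take_length, hsum] at hk0P
      omega
  have hnot : ¬ (l.take (k0 + 1)).sum ≤ i :=
    Nat.findGreatest_is_greatest (P := fun k => (l.take k).sum ≤ i)
      (Nat.lt_succ_self _) (by omega)
  refine ⟨⟨k0, hk0lt⟩, hk0P, ?_⟩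
  show i < (l.take k0).sum + l.get ⟨k0, hk0lt⟩
  have hs := stmt6_t_succ hk0lt
  omega

lemma stmt6_block_unique_aux {k k' : Fin l.length} {i : ℕ}
    (h2 : i < (l.take (k : ℕ)).sum + l.get k) (h1' : (l.take (k' : ℕ)).sum ≤ i)
    (hlt : (k : ℕ) < (k' : ℕ)) : False := by
  have hs := stmt6_t_succ k.isLt
  simp only [Fin.eta] at hs
  have hm : (l.take ((k : ℕ) + 1)).sum ≤ (l.take (k' : ℕ)).sum := stmt6_t_mono hlt
  omega

lemma stmt6_block_unique {k k' : Fin l.length} {i : ℕ}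
    (h1 : (l.take (k : ℕ)).sum ≤ i) (h2 : i < (l.take (k : ℕ)).sum + l.get k)
    (h1' : (l.take (k' : ℕ)).sum ≤ i) (h2' : i < (l.take (k' : ℕ)).sum + l.get k') :
    k = k' := by
  rcases lt_trichotomy (k : ℕ) (k' : ℕ) with h | h | h
  · exact (stmt6_block_unique_aux h2 h1' h).elim
  · exact Fin.ext h
  · exact (stmt6_block_unique_aux h2' h1 h).elim

lemma stmt6_no_ps_between {k : Fin l.length} {m : ℕ}
    (h1 : (l.take (k : ℕ)).sum < m) (h2 : m < (l.take (k : ℕ)).sum + l.get k) :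
    ∀ r, (l.take r).sum ≠ m := by
  intro r hr
  have hs := stmt6_t_succ k.isLt
  simp only [Fin.eta] at hs
  rcases le_or_gt r (k : ℕ) with h | h
  · have := stmt6_t_mono (l := l) h; omega
  · have := stmt6_t_mono (l := l) (show (k : ℕ) + 1 ≤ r from h); omega

variable {n : ℕ}

lemma stmt6_blockB_apply (i j : Fin n) (k : Fin l.length)
    (h1 : (l.take (k : ℕ)).sum ≤ (i : ℕ)) (h2 : (i : ℕ) < (l.take (k : ℕ)).sum + l.get k) :
    blockB K n l i j =
      if (i : ℕ) + (j : ℕ) + 1 = 2 * (l.take (k : ℕ)).sum + l.get k then 1 else 0 := by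
  simp only [blockB, Matrix.of_apply]
  split_ifs with hex heq heq
  · rfl
  · obtain ⟨k', a1, a2, a3⟩ := hex
    have hkk : k' = k := stmt6_block_unique a1 a2 h1 h2
    subst hkk
    exact absurd a3 heq
  · exact absurd ⟨k, h1, h2, heq⟩ hex
  · rfl

lemma stmt6_blockB_symm : (blockB K n l)ᵀ = blockB K n l := by
  ext i j
  simp only [blockB, Matrix.transpose_apply, Matrix.of_apply]
  refine if_congr ⟨?_, ?_⟩ rfl rfl <;>
    · rintro ⟨k, a1, a2, a3⟩
      exact ⟨k, by omega, by omega, by omega⟩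

lemma stmt6_blockB_mul_self (hsum : l.sum = n) : blockB K n l * blockB K n l = 1 := by
  ext i j
  obtain ⟨k, h1, h2⟩ := stmt6_exists_block hsum i.isLt
  have hs := stmt6_t_succ k.isLt
  simp only [Fin.eta] at hs
  have hn : (l.take ((k : ℕ) + 1)).sum ≤ n := hsum ▸ stmt6_t_le_sum _
  set σ : ℕ := 2 * (l.take (k : ℕ)).sum + l.get k - 1 - (i : ℕ) with hσ
  have hσlt : σ < n := by omega
  have hσ1 : (l.take (k : ℕ)).sum ≤ σ := by omega
  have hσ2 : σ < (l.take (k : ℕ)).sum + l.get k := by omega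
  set m0 : Fin n := ⟨σ, hσlt⟩ with hm0
  have hm0v : (m0 : ℕ) = σ := rfl
  rw [Matrix.mul_apply, Finset.sum_eq_single m0]
  · rw [stmt6_blockB_apply K i m0 k h1 h2, stmt6_blockB_apply K m0 j k hσ1 hσ2,
      if_pos (by omega), one_mul, Matrix.one_apply]
    refine if_congr ?_ rfl rfl
    rw [Fin.ext_iff]
    omega
  · intro m _ hm
    rw [stmt6_blockB_apply K i m k h1 h2, if_neg, zero_mul]
    intro h
    exact hm (Fin.ext (by omega))
  · intro h
    exact absurd (Finset.mem_univ m0) h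

/-- The symmetric predicate describing the entries of `B * T`. -/
def stmt6E (l : List ℕ) (i j : ℕ) : Prop :=
  ∃ k : Fin l.length,
    (l.take (k : ℕ)).sum ≤ i ∧ i < (l.take (k : ℕ)).sum + l.get k ∧
    (l.take (k : ℕ)).sum ≤ j ∧ j < (l.take (k : ℕ)).sum + l.get k ∧
    i + j + 2 = 2 * (l.take (k : ℕ)).sum + l.get k

lemma stmt6E_symm {i j : ℕ} : stmt6E l i j ↔ stmt6E l j i := by
  constructor <;>
    · rintro ⟨k, a1, a2, a3, a4, a5⟩
      exact ⟨k, a3, a4, a1, a2, by omega⟩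

open scoped Classical in
lemma stmt6_BT_apply (hsum : l.sum = n) (i j : Fin n) :
    (blockB K n l * jordanMatrix K n l) i j = if stmt6E l (i : ℕ) (j : ℕ) then 1 else 0 := by
  rw [Matrix.mul_apply]
  simp only [jordanMatrix, Matrix.of_apply]
  by_cases hps : ∀ r, (l.take r).sum ≠ (j : ℕ) + 1
  · have hjn : (j : ℕ) + 1 < n := by
      have h1 := hps l.length
      rw [List.take_length, hsum] at h1
      have := j.isLt
      omega
    set m1 : Fin n := ⟨(j : ℕ) + 1, hjn⟩ with hm1
    rw [Finset.sum_eq_single m1]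
    · rw [if_pos ⟨rfl, hps⟩, mul_one]
      obtain ⟨k, h1, h2⟩ := stmt6_exists_block hsum i.isLt
      rw [stmt6_blockB_apply K i m1 k h1 h2]
      refine if_congr ⟨?_, ?_⟩ rfl rfl
      · intro heq
        have hpk := hps (k : ℕ)
        simp only [hm1] at heq
        exact ⟨k, h1, h2, by omega, by omega, by omega⟩
      · rintro ⟨k', b1, b2, b3, b4, b5⟩
        have hkk : k' = k := stmt6_block_unique b1 b2 h1 h2
        subst hkk
        simp only [hm1]
        omega
    · intro m _ hm
      rw [if_neg, mul_zero]
      rintro ⟨h, -⟩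
      exact hm (Fin.ext (by simp only [hm1]; omega))
    · intro h
      exact absurd (Finset.mem_univ m1) h
  · push_neg at hps
    obtain ⟨r, hr⟩ := hps
    rw [if_neg, Finset.sum_eq_zero]
    · intro m _
      rw [if_neg, mul_zero]
      rintro ⟨-, hps'⟩
      exact hps' r hr
    · rintro ⟨k, b1, b2, b3, b4, b5⟩
      exact stmt6_no_ps_between (show (l.take (k : ℕ)).sum < (j : ℕ) + 1 by omega)
        (show (j : ℕ) + 1 < (l.take (k : ℕ)).sum + l.get k by omega) r hr

lemma stmt6_comm (hsum : l.sum = n) :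
    blockB K n l * jordanMatrix K n l = (jordanMatrix K n l)ᵀ * blockB K n l := by
  classical
  have hBT : (blockB K n l * jordanMatrix K n l)ᵀ = blockB K n l * jordanMatrix K n l := by
    ext i j
    rw [Matrix.transpose_apply, stmt6_BT_apply K hsum, stmt6_BT_apply K hsum]
    exact if_congr stmt6E_symm rfl rfl
  conv_rhs => rw [← stmt6_blockB_symm K (l := l) (n := n), ← Matrix.transpose_mul, hBT]

lemma stmt6_mem_perp {B : Matrix (Fin n) (Fin n) K} {L : Submodule K (Fin n → K)}
    {v : Fin n → K} :
    v ∈ perp K n B L ↔ ∀ u ∈ L, dotProduct u (B.mulVec v) = 0 := Iff.rfl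

lemma stmt6_perp_eq_orthogonal (B : Matrix (Fin n) (Fin n) K) (L : Submodule K (Fin n → K)) :
    perp K n B L = (Matrix.toBilin' B).orthogonal L := by
  ext v
  rw [stmt6_mem_perp, LinearMap.BilinForm.mem_orthogonal_iff]
  constructor <;> intro h u hu <;> have h' := h u hu
  · rwa [Matrix.toBilin'_apply']
  · rwa [Matrix.toBilin'_apply'] at h'

end Aux

/-- For a partition `λ` of `n`, the Jordan endomorphism `T = T_λ` and the
bilinear form `β` with Gram matrix `B_λ`: for every `T`-invariant subspace `L`, the
orthogonal complement `L^⊥` is `T`-invariant, has dimension `n - dim L`, and satisfies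
`(L^⊥)^⊥ = L`.  Consequently, for every `0 ≤ ℓ ≤ n` the map `L ↦ L^⊥` is a bijection
from the `ℓ`-dimensional `T`-invariant subspaces onto the `(n-ℓ)`-dimensional
`T`-invariant subspaces. -/
theorem stmt_6 (n : ℕ) (l : List ℕ)
    (hsort : l.Pairwise (· ≥ ·)) (hpos : ∀ m ∈ l, 1 ≤ m) (hsum : l.sum = n) :
    (∀ L : Submodule K (Fin n → K),
      L.map (jordanMatrix K n l).mulVecLin ≤ L →
        ((perp K n (blockB K n l) L).map (jordanMatrix K n l).mulVecLin ≤
            perp K n (blockB K n l) L ∧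
          Module.finrank K (perp K n (blockB K n l) L) = n - Module.finrank K L ∧
          perp K n (blockB K n l) (perp K n (blockB K n l) L) = L)) ∧
    ∀ ℓ : ℕ, ℓ ≤ n →
      Set.BijOn (perp K n (blockB K n l))
        {L : Submodule K (Fin n → K) |
          Module.finrank K L = ℓ ∧ L.map (jordanMatrix K n l).mulVecLin ≤ L}
        {L : Submodule K (Fin n → K) |
          Module.finrank K L = n - ℓ ∧ L.map (jordanMatrix K n l).mulVecLin ≤ L} := by
  set B := blockB K n l with hB
  set T := jordanMatrix K n l with hT
  set b := Matrix.toBilin' B with hb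
  -- symmetry of the form
  have hsymm : ∀ x y : Fin n → K, b x y = b y x := by
    intro x y
    rw [hb, Matrix.toBilin'_apply', Matrix.toBilin'_apply', Matrix.dotProduct_mulVec,
      ← Matrix.mulVec_transpose, stmt6_blockB_symm, dotProduct_comm, hB]
  have hrefl : b.IsRefl := fun x y h => by rw [hsymm]; exact h
  have hdet : B.det ≠ 0 := by
    intro h0
    have h1 : B.det * B.det = 1 := by
      rw [← Matrix.det_mul, hB, stmt6_blockB_mul_self K hsum, Matrix.det_one]
    rw [h0, mul_zero] at h1
    exact zero_ne_one h1
  have hnd : b.Nondegenerate :=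
    LinearMap.BilinForm.nondegenerate_toBilin'_of_det_ne_zero' B hdet
  -- main pointwise statement
  have main : ∀ L : Submodule K (Fin n → K),
      L.map T.mulVecLin ≤ L →
        (perp K n B L).map T.mulVecLin ≤ perp K n B L ∧
          Module.finrank K (perp K n B L) = n - Module.finrank K L ∧
          perp K n B (perp K n B L) = L := by
    intro L hL
    refine ⟨?_, ?_, ?_⟩
    · rintro x ⟨v, hv, rfl⟩
      rw [stmt6_mem_perp]
      intro u hu
      replace hv : ∀ u ∈ L, dotProduct u (B.mulVec v) = 0 := hv
      have hTu : T *ᵥ u ∈ L := by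
        refine hL ?_
        refine Submodule.mem_map_of_mem hu
      calc dotProduct u (B *ᵥ T.mulVecLin v)
          = dotProduct u ((B * T) *ᵥ v) := by
            rw [Matrix.mulVecLin_apply, Matrix.mulVec_mulVec]
        _ = dotProduct u ((Tᵀ * B) *ᵥ v) := by rw [hB, hT, stmt6_comm K hsum]
        _ = dotProduct (T *ᵥ u) (B *ᵥ v) := by
            rw [← Matrix.mulVec_mulVec, Matrix.dotProduct_mulVec, Matrix.vecMul_transpose]
        _ = 0 := hv _ hTu
    · rw [stmt6_perp_eq_orthogonal, ← hb,
        LinearMap.BilinForm.finrank_orthogonal hnd L, Module.finrank_fin_fun]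
    · rw [stmt6_perp_eq_orthogonal, stmt6_perp_eq_orthogonal, ← hb,
        LinearMap.BilinForm.orthogonal_orthogonal hnd hrefl]
  refine ⟨main, ?_⟩
  intro ℓ hℓ
  refine ⟨?_, ?_, ?_⟩
  · rintro L ⟨hd, hinv⟩
    exact ⟨by rw [(main L hinv).2.1, hd], (main L hinv).1⟩
  · rintro L1 h1 L2 h2 he
    rw [← (main L1 h1.2).2.2, ← (main L2 h2.2).2.2, he]
  · rintro M ⟨hd, hinv⟩
    refine ⟨perp K n B M, ⟨?_, (main M hinv).1⟩, (main M hinv).2.2⟩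
    rw [(main M hinv).2.1, hd]
    omega

end
end

section
/- Let K be a field of characteristic zero and let T be the nilpotent endomorphism of K^8 with e_1 ↦ e_2 ↦ e_3 ↦ e_4 ↦ 0, e_5 ↦ e_6 ↦ 0, e_7 ↦ e_8 ↦ 0 (Jordan type λ = (4,2,2)). Then for every 4-dimensional subspace L of K^8 with T(L) ⊆ L and every basis v_1, v_2, v_3, v_4 of L, the coefficient of the basis vector e_1 ∧ e_4 ∧ e_6 ∧ e_8 in the expansion of v_1 ∧ v_2 ∧ v_3 ∧ v_4 in the standard basis of ⋀^4 K^8 is zero. That is, the Plücker coordinate p_{1468} vanishes identically on Gr(4,8)^T. -/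
open Polynomial

section Aux

lemma jordan_apply (K : Type*) [Field K] (x : Fin 8 → K) :
    (jordanMatrix K 8 [4,2,2]).mulVecLin x = ![0, x 0, x 1, x 2, 0, x 4, 0, x 6] := by
  have hsum : ∀ k : ℕ, (([4,2,2] : List ℕ).take k).sum ∈ ({0,4,6,8} : Finset ℕ) := by
    intro k
    match k with
    | 0 => decide
    | 1 => decide
    | 2 => decide
    | (n+3) => simp [List.take_succ_cons]
  have hent : ∀ i j : Fin 8, jordanMatrix K 8 [4,2,2] i j =
      if (i:ℕ) = (j:ℕ)+1 ∧ (j:ℕ)+1 ∉ ({4,6,8} : Finset ℕ) then (1:K) else 0 := by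
    intro i j
    classical
    have hiff : ((i:ℕ) = (j:ℕ)+1 ∧ ∀ k, (([4,2,2]:List ℕ).take k).sum ≠ (j:ℕ)+1)
        ↔ ((i:ℕ) = (j:ℕ)+1 ∧ (j:ℕ)+1 ∉ ({4,6,8} : Finset ℕ)) := by
      apply and_congr_right'
      constructor
      · intro h hmem
        simp only [Finset.mem_insert, Finset.mem_singleton] at hmem
        rcases hmem with h4 | h6 | h8
        · exact h 1 (by simp [h4])
        · exact h 2 (by simp [h6])
        · exact h 3 (by simp [h8])
      · intro h k hk
        have := hsum k
        rw [hk] at this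
        simp only [Finset.mem_insert, Finset.mem_singleton] at this h
        omega
    simp only [jordanMatrix, Matrix.of_apply]
    exact if_congr hiff rfl rfl
  funext i
  fin_cases i <;>
    norm_num [Matrix.mulVecLin_apply, Matrix.mulVec, dotProduct, Fin.sum_univ_eight, hent,
      show ((3:Fin 8):ℕ)=3 from rfl, show ((4:Fin 8):ℕ)=4 from rfl,
      show ((5:Fin 8):ℕ)=5 from rfl, show ((6:Fin 8):ℕ)=6 from rfl,
      show ((7:Fin 8):ℕ)=7 from rfl] <;>
    simp [Fin.ext_iff]

lemma orderIso_0357 (hc : ({0, 3, 5, 7} : Finset (Fin 8)).card = 4) (b : Fin 4) :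
    ((({0, 3, 5, 7} : Finset (Fin 8)).orderIsoOfFin hc b : Fin 8)) = ![0, 3, 5, 7] b := by
  have h : ![(0 : Fin 8), 3, 5, 7] = ({0, 3, 5, 7} : Finset (Fin 8)).orderEmbOfFin hc :=
    Finset.orderEmbOfFin_unique hc (by decide) (by decide)
  rw [Finset.coe_orderIsoOfFin_apply, ← h]

end Aux

/-- Over a field of characteristic zero, for the nilpotent endomorphism
`T` of `K^8` of Jordan type `(4,2,2)` (`e₁ ↦ e₂ ↦ e₃ ↦ e₄ ↦ 0`, `e₅ ↦ e₆ ↦ 0`,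
`e₇ ↦ e₈ ↦ 0`), the Plücker coordinate `p_{1468}` vanishes on `Gr(4,8)^T`: for every
`4`-dimensional `T`-invariant subspace `L` and every basis `v` of `L`, the coefficient of
`e₁ ∧ e₄ ∧ e₆ ∧ e₈` in `v 0 ∧ v 1 ∧ v 2 ∧ v 3` is zero. -/
theorem stmt_9 (K : Type*) [Field K] [CharZero K]
    (L : Submodule K (Fin 8 → K)) (hdim : Module.finrank K L = 4)
    (hinv : L.map (jordanMatrix K 8 [4, 2, 2]).mulVecLin ≤ L)
    (v : Fin 4 → Fin 8 → K) (hv : LinearIndependent K v)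
    (hspan : Submodule.span K (Set.range v) = L) :
    pluecker K 8 4 v ⟨({0, 3, 5, 7} : Finset (Fin 8)), by decide⟩ = 0 := by
  classical
  by_contra hd
  set A : Matrix (Fin 4) (Fin 4) K := Matrix.of (fun a b => v a (![0,3,5,7] b)) with hA
  have hPA : pluecker K 8 4 v ⟨({0, 3, 5, 7} : Finset (Fin 8)), by decide⟩ = A.det := by
    unfold pluecker
    congr 1
    ext a b
    simp only [hA, Matrix.of_apply, orderIso_0357]
  rw [hPA] at hd
  set B := A.transpose with hB
  have hdetB : IsUnit B.det := by
    rw [hB, Matrix.det_transpose]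
    exact Ne.isUnit hd
  set c := B⁻¹.mulVec (Pi.single 0 1) with hc
  have hBc : B.mulVec c = Pi.single 0 1 := by
    rw [hc, Matrix.mulVec_mulVec, Matrix.mul_nonsing_inv _ hdetB, Matrix.one_mulVec]
  set w : Fin 8 → K := ∑ a, c a • v a with hw
  have hwL : w ∈ L := by
    rw [← hspan]
    exact Submodule.sum_mem _ fun a _ =>
      Submodule.smul_mem _ _ (Submodule.subset_span (Set.mem_range_self a))
  have hwcoord : ∀ b : Fin 4, w (![0,3,5,7] b) = (Pi.single (0 : Fin 4) (1:K) : Fin 4 → K) b := by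
    intro b
    rw [← hBc]
    simp only [hw, Matrix.mulVec, dotProduct, Finset.sum_apply, Pi.smul_apply,
      smul_eq_mul, hB, Matrix.transpose_apply, hA, Matrix.of_apply]
    exact Finset.sum_congr rfl fun a _ => mul_comm _ _
  have hw0 : w 0 = 1 := by simpa using hwcoord 0
  have hmem : ∀ x ∈ L, (jordanMatrix K 8 [4,2,2]).mulVecLin x ∈ L := by
    intro x hx
    exact hinv (Submodule.mem_map.mpr ⟨x, hx, rfl⟩)
  set Tl := (jordanMatrix K 8 [4,2,2]).mulVecLin with hTl
  have h1 : Tl w ∈ L := hmem w hwL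
  have h2 : Tl (Tl w) ∈ L := hmem _ h1
  have h3 : Tl (Tl (Tl w)) ∈ L := hmem _ h2
  have e1 : Tl w = ![0, w 0, w 1, w 2, 0, w 4, 0, w 6] := jordan_apply K w
  have e2 : Tl (Tl w) = ![0, 0, w 0, w 1, 0, 0, 0, 0] := by
    rw [e1, hTl, jordan_apply]
    ext i
    fin_cases i <;> rfl
  have e3' : Tl ![0, 0, w 0, w 1, 0, 0, 0, 0] = ![0, 0, 0, w 0, 0, 0, 0, 0] := by
    rw [hTl, jordan_apply]
    ext i
    fin_cases i <;> rfl
  set u : Fin 8 → K := Tl (Tl w) - (w 1) • Tl (Tl (Tl w)) with hu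
  have huL : u ∈ L := Submodule.sub_mem _ h2 (Submodule.smul_mem _ _ h3)
  have hu' : u = ![0, 0, 1, 0, 0, 0, 0, 0] := by
    rw [hu, e2, e3', hw0]
    simp only [Matrix.cons_sub_cons, Matrix.smul_cons, smul_eq_mul, mul_one, mul_zero,
      sub_zero, zero_sub, sub_self, neg_zero, Matrix.smul_empty]
    ext i
    fin_cases i <;> rfl
  have hu2 : u 2 = 1 := by rw [hu']; rfl
  have huc : ∀ b : Fin 4, u (![0,3,5,7] b) = 0 := by
    intro b
    rw [hu']
    fin_cases b <;> rfl
  rw [← hspan] at huL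
  obtain ⟨d, hdu⟩ := (Submodule.mem_span_range_iff_exists_fun K).mp huL
  have hBd : B.mulVec d = 0 := by
    funext b
    have hcoord : (∑ a, d a • v a) (![0,3,5,7] b) = u (![0,3,5,7] b) := congrFun hdu _
    rw [huc b] at hcoord
    simp only [Finset.sum_apply, Pi.smul_apply, smul_eq_mul] at hcoord
    simp only [Matrix.mulVec, dotProduct, hB, Matrix.transpose_apply, hA,
      Matrix.of_apply, Pi.zero_apply]
    rw [← hcoord]
    exact Finset.sum_congr rfl fun a _ => mul_comm _ _
  have hd0 : d = 0 := by
    have h := congrArg (fun y => B⁻¹.mulVec y) hBd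
    simpa [Matrix.mulVec_mulVec, Matrix.nonsing_inv_mul _ hdetB, Matrix.one_mulVec,
      Matrix.mulVec_zero] using h
  rw [hd0] at hdu
  simp only [Pi.zero_apply, zero_smul, Finset.sum_const_zero] at hdu
  rw [← hdu] at hu2
  exact one_ne_zero hu2.symm
end

section
/- Let K be a field, n ≥ 1, 1 ≤ ℓ ≤ n, and let T be the regular nilpotent endomorphism of K^n with T(e_j) = e_{j+1} for 1 ≤ j ≤ n−1 and T(e_n) = 0 (the single Jordan block, partition λ = (n)). Then the linear span of the shuffle equations of T inside the dual space (⋀^ℓ K^n)^* equals the linear span of the dual basis functionals {e_J^* : J an ℓ-element subset of {1,…,n} with J ≠ {n−ℓ+1, n−ℓ+2, …, n}}. That is, the shuffle equations are exactly all Plücker coordinates p_J except p_{(n−ℓ+1,…,n)}. -/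
open Polynomial

namespace Stmt17

open Finset

variable {K : Type*} [Field K] {n ℓ : ℕ}

/-- The increasing enumeration of an `ℓ`-subset. -/
noncomputable def en (J : IndexSet n ℓ) : Fin ℓ → Fin n :=
  fun a => ((J.1.orderIsoOfFin J.2) a).1

lemma en_mono (J : IndexSet n ℓ) : StrictMono (en J) :=
  (J.1.orderEmbOfFin J.2).strictMono

lemma en_inj {J I : IndexSet n ℓ} (h : en J = en I) : J = I := by
  have h1 : Set.range (en J) = (J.1 : Set (Fin n)) := Finset.range_orderEmbOfFin J.1 J.2
  have h2 : Set.range (en I) = (I.1 : Set (Fin n)) := Finset.range_orderEmbOfFin I.1 I.2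
  apply Subtype.ext
  apply Finset.coe_injective
  rw [← h1, ← h2, h]

noncomputable def ofEn (g : Fin ℓ → Fin n) (hg : StrictMono g) : IndexSet n ℓ :=
  ⟨Finset.univ.image g, by
    rw [Finset.card_image_of_injective _ hg.injective, Finset.card_univ, Fintype.card_fin]⟩

lemma en_ofEn (g : Fin ℓ → Fin n) (hg : StrictMono g) : en (ofEn g hg) = g :=
  (Finset.orderEmbOfFin_unique (ofEn g hg).2
    (fun x => Finset.mem_image_of_mem g (Finset.mem_univ x)) hg).symm

lemma mono_le {g : Fin ℓ → Fin n} (hg : StrictMono g) (a : Fin ℓ) :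
    (g a : ℕ) ≤ n - ℓ + a := by
  have key : ∀ (c : ℕ) (b : Fin ℓ) (h : (b : ℕ) + c < ℓ), (g b : ℕ) + c ≤ g ⟨(b : ℕ) + c, h⟩ := by
    intro c
    induction c with
    | zero =>
      intro b h
      have hb : (⟨(b : ℕ) + 0, h⟩ : Fin ℓ) = b := by ext; simp
      rw [hb]
      omega
    | succ c ih =>
      intro b h
      have h' : (b : ℕ) + c < ℓ := by omega
      have h1 := ih b h'
      have h2 : g ⟨(b : ℕ) + c, h'⟩ < g ⟨(b : ℕ) + (c + 1), h⟩ := by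
        apply hg
        rw [Fin.lt_def]
        simp
      have h3 : (g ⟨(b : ℕ) + c, h'⟩ : ℕ) < (g ⟨(b : ℕ) + (c + 1), h⟩ : ℕ) := h2
      omega
  have ha := a.isLt
  have h : (a : ℕ) + (ℓ - 1 - a) < ℓ := by omega
  have h1 := key (ℓ - 1 - a) a h
  have h2 : (g ⟨(a : ℕ) + (ℓ - 1 - a), h⟩ : ℕ) < n := (g _).isLt
  omega

lemma jordan_apply (r c : Fin n) :
    jordanMatrix K n [n] r c = if (r : ℕ) = (c : ℕ) + 1 then 1 else 0 := by
  unfold jordanMatrix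
  rw [Matrix.of_apply]
  by_cases h : (r : ℕ) = (c : ℕ) + 1
  · have hside : ∀ k, (([n] : List ℕ).take k).sum ≠ (c : ℕ) + 1 := by
      intro k
      have hr := r.isLt
      cases k with
      | zero => simp
      | succ k => simp; omega
    rw [if_pos ⟨h, hside⟩, if_pos h]
  · rw [if_neg (by tauto), if_neg h]

lemma entry_apply (r c : Fin n) :
    ((1 : Matrix (Fin n) (Fin n) K[X]) + (X : K[X]) • (jordanMatrix K n [n]).map C) r c
      = (if r = c then 1 else 0) + (if (r : ℕ) = (c : ℕ) + 1 then X else 0) := by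
  rw [Matrix.add_apply, Matrix.smul_apply, Matrix.map_apply, jordan_apply, Matrix.one_apply]
  congr 1
  split_ifs with h
  · simp
  · simp

lemma det_minor {f g : Fin ℓ → Fin n} (hf : StrictMono f) (hg : StrictMono g) :
    Matrix.det (Matrix.of fun a b =>
      ((1 : Matrix (Fin n) (Fin n) K[X]) + (X : K[X]) • (jordanMatrix K n [n]).map C)
        (f a) (g b))
    = if ∀ a, (f a : ℕ) = (g a : ℕ) ∨ (f a : ℕ) = (g a : ℕ) + 1
      then X ^ (Finset.univ.filter fun a => (f a : ℕ) = (g a : ℕ) + 1).card else 0 := by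
  classical
  set M : Matrix (Fin ℓ) (Fin ℓ) K[X] := Matrix.of fun a b =>
      ((1 : Matrix (Fin n) (Fin n) K[X]) + (X : K[X]) • (jordanMatrix K n [n]).map C)
        (f a) (g b) with hM
  have hMab : ∀ a b, M a b = (if f a = g b then 1 else 0)
      + (if (f a : ℕ) = (g b : ℕ) + 1 then X else 0) := by
    intro a b
    rw [hM, Matrix.of_apply, entry_apply]
  have hkey : ∀ σ : Equiv.Perm (Fin ℓ), (∏ a, M (σ a) a) ≠ 0 → σ = 1 := by
    intro σ hσ
    have hcond : ∀ a, (f (σ a) : ℕ) = (g a : ℕ) ∨ (f (σ a) : ℕ) = (g a : ℕ) + 1 := by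
      intro a
      have hne := Finset.prod_ne_zero_iff.mp hσ a (Finset.mem_univ a)
      rw [hMab] at hne
      by_contra hc
      push_neg at hc
      apply hne
      rw [if_neg (fun he => hc.1 (congrArg Fin.val he)), if_neg hc.2, add_zero]
  -- σ is strictly monotone
    have hmono : StrictMono (fun a => σ a) := by
      intro a b hab
      by_contra hc
      push_neg at hc
      rcases lt_or_eq_of_le hc with hlt | heq
      · have h1 : (f (σ b) : ℕ) < (f (σ a) : ℕ) := hf hlt
        have h2 := hcond a
        have h3 := hcond b
        have h4 : (g a : ℕ) < (g b : ℕ) := hg hab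
        omega
      · exact absurd (σ.injective heq) hab.ne'
    have hr : Set.range (fun a => σ a) = Set.range (id : Fin ℓ → Fin ℓ) := by
      rw [Set.range_id]
      exact σ.surjective.range_eq
    have hid : (fun a => σ a) = (id : Fin ℓ → Fin ℓ) :=
      (StrictMono.range_inj hmono strictMono_id).mp hr
    exact Equiv.ext fun a => congrFun hid a
  rw [Matrix.det_apply]
  rw [Finset.sum_eq_single (1 : Equiv.Perm (Fin ℓ))]
  rotate_left
  · intro σ _ hσ1
    rcases eq_or_ne (∏ a, M (σ a) a) 0 with h0 | h0
    · rw [h0, smul_zero]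
    · exact absurd (hkey σ h0) hσ1
  · intro h
    exact absurd (Finset.mem_univ 1) h
  rw [Equiv.Perm.sign_one, one_smul]
  simp only [Equiv.Perm.one_apply]
  by_cases hc : ∀ a, (f a : ℕ) = (g a : ℕ) ∨ (f a : ℕ) = (g a : ℕ) + 1
  · rw [if_pos hc]
    have hterm : ∀ a ∈ Finset.univ, M a a
        = if (f a : ℕ) = (g a : ℕ) + 1 then (X : K[X]) else 1 := by
      intro a _
      rw [hMab]
      rcases hc a with h | h
      · rw [if_pos (Fin.ext h), if_neg (by omega), if_neg (by omega), add_zero]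
      · rw [if_pos h, if_neg (fun he => by have := congrArg Fin.val he; omega), zero_add,
          if_pos h]
    rw [Finset.prod_congr rfl hterm, Finset.prod_ite, Finset.prod_const,
      Finset.prod_const_one, mul_one]
  · rw [if_neg hc]
    push_neg at hc
    obtain ⟨a0, h1, h2⟩ := hc
    apply Finset.prod_eq_zero (Finset.mem_univ a0)
    rw [hMab, if_neg (fun he => h1 (congrArg Fin.val he)), if_neg h2, add_zero]

lemma shuffleCoeff_eq (i : ℕ) (J I : IndexSet n ℓ) :
    shuffleCoeff K n ℓ (jordanMatrix K n [n]) i J I =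
      if (∀ a, (en J a : ℕ) = (en I a : ℕ) ∨ (en J a : ℕ) = (en I a : ℕ) + 1)
          ∧ (Finset.univ.filter fun a => (en J a : ℕ) = (en I a : ℕ) + 1).card = i
      then 1 else 0 := by
  classical
  have : shuffleCoeff K n ℓ (jordanMatrix K n [n]) i J I
      = (Matrix.det (Matrix.of fun a b =>
          ((1 : Matrix (Fin n) (Fin n) K[X]) + (X : K[X]) • (jordanMatrix K n [n]).map C)
            (en J a) (en I b))).coeff i := rfl
  rw [this, det_minor (en_mono J) (en_mono I)]
  by_cases hcompat : ∀ a, (en J a : ℕ) = (en I a : ℕ) ∨ (en J a : ℕ) = (en I a : ℕ) + 1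
  · rw [if_pos hcompat, Polynomial.coeff_X_pow]
    by_cases hd : (Finset.univ.filter fun a => (en J a : ℕ) = (en I a : ℕ) + 1).card = i
    · rw [if_pos hd.symm, if_pos ⟨hcompat, hd⟩]
    · rw [if_neg (fun h => hd h.symm), if_neg (by tauto)]
  · rw [if_neg hcompat, Polynomial.coeff_zero, if_neg (by tauto)]

lemma shuffleFunc_eq (i : ℕ) (J : IndexSet n ℓ) :
    shuffleFunc K n ℓ (jordanMatrix K n [n]) i J =
      ∑ I ∈ Finset.univ.filter (fun I : IndexSet n ℓ =>
          (∀ a, (en J a : ℕ) = (en I a : ℕ) ∨ (en J a : ℕ) = (en I a : ℕ) + 1)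
          ∧ (Finset.univ.filter fun a => (en J a : ℕ) = (en I a : ℕ) + 1).card = i),
        LinearMap.proj I := by
  classical
  rw [Finset.sum_filter]
  unfold shuffleFunc
  apply Finset.sum_congr rfl
  intro I _
  rw [shuffleCoeff_eq]
  split_ifs with h
  · rw [one_smul]
  · rw [zero_smul]

/-- The "top" subset `{n-ℓ, …, n-1}`. -/
abbrev topF (n ℓ : ℕ) : Finset (Fin n) := Finset.univ.filter (fun j : Fin n => n - ℓ ≤ (j : ℕ))

def gtop (hln : ℓ ≤ n) : Fin ℓ → Fin n := fun a => ⟨n - ℓ + a, by have := a.isLt; omega⟩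

lemma gtop_mono (hln : ℓ ≤ n) : StrictMono (gtop hln) := by
  intro a b h
  rw [Fin.lt_def]
  have : (a : ℕ) < b := h
  simp only [gtop]
  omega

lemma en_top {I : IndexSet n ℓ} (hln : ℓ ≤ n) (h : I.1 = topF n ℓ) :
    ∀ a, (en I a : ℕ) = n - ℓ + a := by
  have hu : gtop hln = fun a => I.1.orderEmbOfFin I.2 a := by
    have := Finset.orderEmbOfFin_unique I.2
      (f := gtop hln)
      (fun x => by
        rw [h, Finset.mem_filter]
        exact ⟨Finset.mem_univ _, by simp [gtop]⟩)
      (gtop_mono hln)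
    exact this
  intro a
  have := congrFun hu a
  have h2 : en I a = gtop hln a := this.symm
  rw [h2]
  rfl

lemma top_of_en {I : IndexSet n ℓ} (hln : ℓ ≤ n) (h : ∀ a, (en I a : ℕ) = n - ℓ + a) :
    I.1 = topF n ℓ := by
  have h' : en I = gtop hln := funext fun a => Fin.ext (h a)
  apply Finset.coe_injective
  have h1 : Set.range (en I) = (I.1 : Set (Fin n)) := Finset.range_orderEmbOfFin I.1 I.2
  rw [← h1, h']
  ext j
  simp only [Set.mem_range, Finset.coe_filter, Finset.mem_univ, true_and, Set.mem_setOf_eq]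
  constructor
  · rintro ⟨a, rfl⟩
    simp [gtop]
  · intro hj
    have hjn := j.isLt
    refine ⟨⟨(j : ℕ) - (n - ℓ), by omega⟩, ?_⟩
    apply Fin.ext
    simp [gtop]
    omega

lemma not_top {i : ℕ} (hi : 1 ≤ i) (hln : ℓ ≤ n) {J I : IndexSet n ℓ}
    (hd : (Finset.univ.filter fun a => (en J a : ℕ) = (en I a : ℕ) + 1).card = i) :
    I.1 ≠ topF n ℓ := by
  intro htop
  have he := en_top hln htop
  have hpos : 0 < (Finset.univ.filter fun a => (en J a : ℕ) = (en I a : ℕ) + 1).card := by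
    omega
  obtain ⟨a, ha⟩ := Finset.card_pos.mp hpos
  rw [Finset.mem_filter] at ha
  have hb := mono_le (en_mono J) a
  have := he a
  omega

lemma rev_bound (B : ℕ) : ∀ (m : ℕ) (Z : ℕ → ℕ), (∀ j < m, Z j < B) →
    ∑ j ∈ Finset.range m, Z j * B ^ (m - 1 - j) < B ^ m := by
  intro m
  induction m with
  | zero => intro Z h; simp
  | succ m ih =>
    intro Z h
    rw [Finset.sum_range_succ]
    have h1 : ∑ j ∈ Finset.range m, Z j * B ^ (m + 1 - 1 - j)
        = B * ∑ j ∈ Finset.range m, Z j * B ^ (m - 1 - j) := by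
      rw [Finset.mul_sum]
      apply Finset.sum_congr rfl
      intro j hj
      rw [Finset.mem_range] at hj
      have he : m + 1 - 1 - j = (m - 1 - j) + 1 := by omega
      rw [he, pow_succ]
      ring
    rw [h1]
    have h2 := ih Z (fun j hj => h j (by omega))
    have h3 : Z m < B := h m (by omega)
    have h4 : m + 1 - 1 - m = 0 := by omega
    rw [h4, pow_zero, mul_one, pow_succ]
    calc B * (∑ j ∈ Finset.range m, Z j * B ^ (m - 1 - j)) + Z m
        < B * (∑ j ∈ Finset.range m, Z j * B ^ (m - 1 - j)) + B := by omega
      _ = B * ((∑ j ∈ Finset.range m, Z j * B ^ (m - 1 - j)) + 1) := by ring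
      _ ≤ B * B ^ m := Nat.mul_le_mul_left B h2
      _ = B ^ m * B := mul_comm _ _

lemma core_lt {B L : ℕ} {Xd Yd : ℕ → ℕ} (hY : ∀ p < L, Yd p < B) (ps : ℕ) (hp : ps < L)
    (hag : ∀ q < ps, Xd q = Yd q) (hlt : Yd ps < Xd ps) :
    ∑ p ∈ Finset.range L, Yd p * B ^ (L - 1 - p) < ∑ p ∈ Finset.range L, Xd p * B ^ (L - 1 - p) := by
  have hsplit : ∀ W : ℕ → ℕ, ∑ p ∈ Finset.range L, W p * B ^ (L - 1 - p)
      = ((∑ p ∈ Finset.range ps, W p * B ^ (L - 1 - p)) + W ps * B ^ (L - 1 - ps))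
        + ∑ p ∈ Finset.Ico (ps + 1) L, W p * B ^ (L - 1 - p) := by
    intro W
    rw [← Finset.sum_range_succ (fun p => W p * B ^ (L - 1 - p)) ps]
    rw [Finset.range_eq_Ico, Finset.range_eq_Ico]
    exact (Finset.sum_Ico_consecutive (fun p => W p * B ^ (L - 1 - p)) (Nat.zero_le (ps + 1)) (show ps + 1 ≤ L by omega)).symm
  rw [hsplit Xd, hsplit Yd]
  have hhead : ∑ p ∈ Finset.range ps, Yd p * B ^ (L - 1 - p)
      = ∑ p ∈ Finset.range ps, Xd p * B ^ (L - 1 - p) :=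
    Finset.sum_congr rfl fun q hq => by rw [hag q (Finset.mem_range.mp hq)]
  have htail : ∑ p ∈ Finset.Ico (ps + 1) L, Yd p * B ^ (L - 1 - p) < B ^ (L - 1 - ps) := by
    rw [Finset.sum_Ico_eq_sum_range]
    have hm : L - (ps + 1) = L - 1 - ps := by omega
    have heq : ∑ j ∈ Finset.range (L - (ps + 1)), Yd (ps + 1 + j) * B ^ (L - 1 - (ps + 1 + j))
        = ∑ j ∈ Finset.range (L - 1 - ps), Yd (ps + 1 + j) * B ^ ((L - 1 - ps) - 1 - j) := by
      rw [hm]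
      apply Finset.sum_congr rfl
      intro j hj
      have h5 : L - 1 - (ps + 1 + j) = (L - 1 - ps) - 1 - j := by omega
      rw [h5]
    rw [heq]
    exact rev_bound B (L - 1 - ps) _ (fun j hj => hY (ps + 1 + j) (by omega))
  have hYp : Yd ps * B ^ (L - 1 - ps) + B ^ (L - 1 - ps) ≤ Xd ps * B ^ (L - 1 - ps) := by
    have h1 : Yd ps + 1 ≤ Xd ps := hlt
    calc Yd ps * B ^ (L - 1 - ps) + B ^ (L - 1 - ps) = (Yd ps + 1) * B ^ (L - 1 - ps) := by ring
      _ ≤ Xd ps * B ^ (L - 1 - ps) := Nat.mul_le_mul_right _ h1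
  have hTX : 0 ≤ ∑ p ∈ Finset.Ico (ps + 1) L, Xd p * B ^ (L - 1 - p) := Nat.zero_le _
  linarith [hhead, htail, hYp, hTX]

noncomputable def mval (I : IndexSet n ℓ) : ℕ :=
  ∑ p ∈ Finset.range ℓ, (if h : p < ℓ then n - 1 - (en I ⟨p, h⟩ : ℕ) else 0) * n ^ (ℓ - 1 - p)

lemma mval_lt {I I' : IndexSet n ℓ} (astar : Fin ℓ)
    (hag : ∀ b : Fin ℓ, b < astar → en I' b = en I b)
    (hlt : (en I astar : ℕ) < (en I' astar : ℕ)) : mval I' < mval I := by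
  apply core_lt (B := n)
    (Xd := fun p => if h : p < ℓ then n - 1 - (en I ⟨p, h⟩ : ℕ) else 0)
    (Yd := fun p => if h : p < ℓ then n - 1 - (en I' ⟨p, h⟩ : ℕ) else 0)
    (ps := (astar : ℕ)) (hp := astar.isLt)
  · intro p hp
    show (if h : p < ℓ then n - 1 - (en I' ⟨p, h⟩ : ℕ) else 0) < n
    rw [dif_pos hp]
    have := (en I' ⟨p, hp⟩).isLt
    omega
  · intro q hq
    have hq' : q < ℓ := by have := astar.isLt; omega
    show (if h : q < ℓ then n - 1 - (en I ⟨q, h⟩ : ℕ) else 0)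
        = (if h : q < ℓ then n - 1 - (en I' ⟨q, h⟩ : ℕ) else 0)
    rw [dif_pos hq', dif_pos hq']
    have heq : en I' ⟨q, hq'⟩ = en I ⟨q, hq'⟩ := hag ⟨q, hq'⟩ (by rw [Fin.lt_def]; exact hq)
    rw [heq]
  · show (if h : (astar : ℕ) < ℓ then n - 1 - (en I' ⟨(astar : ℕ), h⟩ : ℕ) else 0)
        < (if h : (astar : ℕ) < ℓ then n - 1 - (en I ⟨(astar : ℕ), h⟩ : ℕ) else 0)
    rw [dif_pos astar.isLt, dif_pos astar.isLt]
    have h1 : (en I' ⟨(astar : ℕ), astar.isLt⟩ : ℕ) = (en I' astar : ℕ) := by congr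
    have h2 : (en I ⟨(astar : ℕ), astar.isLt⟩ : ℕ) = (en I astar : ℕ) := by congr
    have h3 := (en I' astar).isLt
    rw [h1, h2]
    omega

end Stmt17


/-- For the regular nilpotent `T` on `K^n` (single Jordan block,
`λ = (n)`), the span of the shuffle equations inside the dual space of `⋀^ℓ K^n` is the
span of all dual basis functionals `e_J^*` with `J ≠ {n-ℓ+1, …, n}`. -/
theorem stmt_17 (K : Type*) [Field K] (n ℓ : ℕ) (hn : 1 ≤ n) (h1 : 1 ≤ ℓ) (h2 : ℓ ≤ n) :
    Submodule.span K {f : (IndexSet n ℓ → K) →ₗ[K] K |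
        ∃ (i : ℕ) (J : IndexSet n ℓ), 1 ≤ i ∧ i ≤ ℓ ∧
          f = shuffleFunc K n ℓ (jordanMatrix K n [n]) i J} =
      Submodule.span K {f : (IndexSet n ℓ → K) →ₗ[K] K |
        ∃ J : IndexSet n ℓ,
          J.1 ≠ Finset.univ.filter (fun j : Fin n => n - ℓ ≤ (j : ℕ)) ∧
          f = LinearMap.proj J} := by
  classical
  apply le_antisymm
  · -- shuffle equations are supported away from the top Plücker coordinate
    rw [Submodule.span_le]
    rintro f ⟨i, J, hi1, hi2, rfl⟩
    rw [Stmt17.shuffleFunc_eq]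
    apply Submodule.sum_mem
    intro I hI
    rw [Finset.mem_filter] at hI
    exact Submodule.subset_span ⟨I, Stmt17.not_top hi1 h2 hI.2.2, rfl⟩
  · rw [Submodule.span_le]
    rintro f ⟨I₀, hne₀, rfl⟩
    have main : ∀ m (I : IndexSet n ℓ), Stmt17.mval I = m → I.1 ≠ Stmt17.topF n ℓ →
        (LinearMap.proj I : (IndexSet n ℓ → K) →ₗ[K] K) ∈
          Submodule.span K {f : (IndexSet n ℓ → K) →ₗ[K] K |
            ∃ (i : ℕ) (J : IndexSet n ℓ), 1 ≤ i ∧ i ≤ ℓ ∧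
              f = shuffleFunc K n ℓ (jordanMatrix K n [n]) i J} := by
      intro m
      induction m using Nat.strong_induction_on with
      | _ m IH =>
        intro I hm hne
        have hBound : ∀ a : Fin ℓ, (Stmt17.en I a : ℕ) ≤ n - ℓ + a :=
          fun a => Stmt17.mono_le (Stmt17.en_mono I) a
        have hex : ∃ a : Fin ℓ, (Stmt17.en I a : ℕ) ≠ n - ℓ + a := by
          by_contra hall
          push_neg at hall
          exact hne (Stmt17.top_of_en h2 hall)
        have hSne : (Finset.univ.filter
            (fun a : Fin ℓ => (Stmt17.en I a : ℕ) ≠ n - ℓ + (a : ℕ))).Nonempty := by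
          obtain ⟨a, ha⟩ := hex
          exact ⟨a, Finset.mem_filter.mpr ⟨Finset.mem_univ a, ha⟩⟩
        set a0 := (Finset.univ.filter
            (fun a : Fin ℓ => (Stmt17.en I a : ℕ) ≠ n - ℓ + (a : ℕ))).max' hSne with ha0def
        have ha0m := Finset.max'_mem _ hSne
        rw [← ha0def, Finset.mem_filter] at ha0m
        have ha0 : (Stmt17.en I a0 : ℕ) ≠ n - ℓ + (a0 : ℕ) := ha0m.2
        have ha0lt : (Stmt17.en I a0 : ℕ) < n - ℓ + (a0 : ℕ) := lt_of_le_of_ne (hBound a0) ha0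
        have htail : ∀ b : Fin ℓ, a0 < b → (Stmt17.en I b : ℕ) = n - ℓ + (b : ℕ) := by
          intro b hb
          by_contra hbne
          have hbS : b ∈ Finset.univ.filter
              (fun a : Fin ℓ => (Stmt17.en I a : ℕ) ≠ n - ℓ + (a : ℕ)) :=
            Finset.mem_filter.mpr ⟨Finset.mem_univ b, hbne⟩
          have hle := Finset.le_max' _ b hbS
          rw [← ha0def] at hle
          exact absurd hle (not_le.mpr hb)
        have ha0l := a0.isLt
        -- the incremented tuple
        have hgmem : ∀ a : Fin ℓ,
            (Stmt17.en I a : ℕ) + (if (a : ℕ) ≤ (a0 : ℕ) then 1 else 0) < n := by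
          intro a
          split_ifs with h
          · have hmle : (Stmt17.en I a : ℕ) ≤ (Stmt17.en I a0 : ℕ) :=
              (Stmt17.en_mono I).monotone (by rwa [Fin.le_def])
            omega
          · exact (Stmt17.en I a).isLt
        set g : Fin ℓ → Fin n :=
          fun a => ⟨(Stmt17.en I a : ℕ) + (if (a : ℕ) ≤ (a0 : ℕ) then 1 else 0), hgmem a⟩
          with hgdef
        have hgval : ∀ a, (g a : ℕ)
            = (Stmt17.en I a : ℕ) + (if (a : ℕ) ≤ (a0 : ℕ) then 1 else 0) := fun a => rfl
        have hg : StrictMono g := by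
          intro a b hab
          rw [Fin.lt_def, hgval, hgval]
          have hab' : (a : ℕ) < (b : ℕ) := hab
          have hval : (Stmt17.en I a : ℕ) < (Stmt17.en I b : ℕ) := Stmt17.en_mono I hab
          by_cases hA : (a : ℕ) ≤ (a0 : ℕ) <;> by_cases hB : (b : ℕ) ≤ (a0 : ℕ)
          · rw [if_pos hA, if_pos hB]; omega
          · rw [if_pos hA, if_neg hB]
            have hb0 : a0 < b := by rw [Fin.lt_def]; omega
            have ht := htail b hb0
            have hmle : (Stmt17.en I a : ℕ) ≤ (Stmt17.en I a0 : ℕ) :=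
              (Stmt17.en_mono I).monotone (by rwa [Fin.le_def])
            omega
          · omega
          · rw [if_neg hA, if_neg hB]; omega
        set J : IndexSet n ℓ := Stmt17.ofEn g hg with hJdef
        have hJen : Stmt17.en J = g := Stmt17.en_ofEn g hg
        set k := (a0 : ℕ) + 1 with hkdef
        have hk1 : 1 ≤ k := by omega
        have hk2 : k ≤ ℓ := by omega
        have hcompat : ∀ a, (Stmt17.en J a : ℕ) = (Stmt17.en I a : ℕ)
            ∨ (Stmt17.en J a : ℕ) = (Stmt17.en I a : ℕ) + 1 := by
          intro a
          rw [hJen, hgval]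
          split_ifs with h
          · right; rfl
          · left; rfl
        have hIic : Finset.univ.filter (fun a : Fin ℓ => (a : ℕ) ≤ (a0 : ℕ))
            = Finset.Iic a0 := by
          ext a
          rw [Finset.mem_filter, Finset.mem_Iic]
          exact ⟨fun h => h.2, fun h => ⟨Finset.mem_univ a, h⟩⟩
        have hfilter : (Finset.univ.filter
              fun a => (Stmt17.en J a : ℕ) = (Stmt17.en I a : ℕ) + 1)
            = Finset.univ.filter (fun a : Fin ℓ => (a : ℕ) ≤ (a0 : ℕ)) := by
          ext a
          simp only [Finset.mem_filter, Finset.mem_univ, true_and]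
          rw [hJen, hgval]
          split_ifs with h <;> simp [h]
        have hcard : (Finset.univ.filter
            fun a => (Stmt17.en J a : ℕ) = (Stmt17.en I a : ℕ) + 1).card = k := by
          rw [hfilter, hIic, Fin.card_Iic]
        set T : Finset (IndexSet n ℓ) := Finset.univ.filter (fun I' : IndexSet n ℓ =>
            (∀ a, (Stmt17.en J a : ℕ) = (Stmt17.en I' a : ℕ)
              ∨ (Stmt17.en J a : ℕ) = (Stmt17.en I' a : ℕ) + 1)
            ∧ (Finset.univ.filter
                fun a => (Stmt17.en J a : ℕ) = (Stmt17.en I' a : ℕ) + 1).card = k) with hT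
        have hImem : I ∈ T := by
          rw [hT, Finset.mem_filter]
          exact ⟨Finset.mem_univ I, hcompat, hcard⟩
        have hsum : shuffleFunc K n ℓ (jordanMatrix K n [n]) k J
            = ∑ I' ∈ T, (LinearMap.proj I' : (IndexSet n ℓ → K) →ₗ[K] K) :=
          Stmt17.shuffleFunc_eq k J
        have hdecomp : (LinearMap.proj I : (IndexSet n ℓ → K) →ₗ[K] K)
            = shuffleFunc K n ℓ (jordanMatrix K n [n]) k J
              - ∑ I' ∈ T.erase I, (LinearMap.proj I' : (IndexSet n ℓ → K) →ₗ[K] K) := by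
          rw [hsum, ← Finset.add_sum_erase T _ hImem]
          abel
        rw [hdecomp]
        apply Submodule.sub_mem
        · exact Submodule.subset_span ⟨k, J, hk1, hk2, rfl⟩
        · apply Submodule.sum_mem
          intro I' hI'
          have hI'ne : I' ≠ I := (Finset.mem_erase.mp hI').1
          have hI'T := (Finset.mem_erase.mp hI').2
          rw [hT, Finset.mem_filter] at hI'T
          obtain ⟨-, hcompat', hcard'⟩ := hI'T
          have hdiffex : ∃ a, Stmt17.en I' a ≠ Stmt17.en I a := by
            by_contra hc
            push_neg at hc
            exact hI'ne (Stmt17.en_inj (funext hc))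
          have hDne : (Finset.univ.filter
              (fun a : Fin ℓ => Stmt17.en I' a ≠ Stmt17.en I a)).Nonempty := by
            obtain ⟨a, ha⟩ := hdiffex
            exact ⟨a, Finset.mem_filter.mpr ⟨Finset.mem_univ a, ha⟩⟩
          set astar := (Finset.univ.filter
              (fun a : Fin ℓ => Stmt17.en I' a ≠ Stmt17.en I a)).min' hDne with hastardef
          have hastarm := Finset.min'_mem _ hDne
          rw [← hastardef, Finset.mem_filter] at hastarm
          have hastar : Stmt17.en I' astar ≠ Stmt17.en I astar := hastarm.2
          have hastarv : (Stmt17.en I' astar : ℕ) ≠ (Stmt17.en I astar : ℕ) :=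
            fun h => hastar (Fin.ext h)
          have hbelow : ∀ b, b < astar → Stmt17.en I' b = Stmt17.en I b := by
            intro b hb
            by_contra hbne
            have hbD : b ∈ Finset.univ.filter
                (fun a : Fin ℓ => Stmt17.en I' a ≠ Stmt17.en I a) :=
              Finset.mem_filter.mpr ⟨Finset.mem_univ b, hbne⟩
            have hle := Finset.min'_le _ b hbD
            rw [← hastardef] at hle
            exact absurd hle (not_le.mpr hb)
          have hlt : (Stmt17.en I astar : ℕ) < (Stmt17.en I' astar : ℕ) := by
            by_cases hcase : (astar : ℕ) ≤ (a0 : ℕ)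
            · have hJa : (Stmt17.en J astar : ℕ) = (Stmt17.en I astar : ℕ) + 1 := by
                rw [hJen, hgval, if_pos hcase]
              rcases hcompat' astar with h | h
              · omega
              · omega
            · exfalso
              have hsub : insert astar (Finset.univ.filter (fun a : Fin ℓ => (a : ℕ) ≤ (a0 : ℕ)))
                  ⊆ Finset.univ.filter
                    (fun a => (Stmt17.en J a : ℕ) = (Stmt17.en I' a : ℕ) + 1) := by
                intro b hb
                rw [Finset.mem_insert] at hb
                rcases hb with rfl | hb
                · have hJa : (Stmt17.en J astar : ℕ) = (Stmt17.en I astar : ℕ) := by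
                    rw [hJen, hgval, if_neg hcase]
                    omega
                  rcases hcompat' astar with h | h
                  · exact absurd (by omega : (Stmt17.en I' astar : ℕ) = (Stmt17.en I astar : ℕ))
                      hastarv
                  · exact Finset.mem_filter.mpr ⟨Finset.mem_univ _, h⟩
                · rw [Finset.mem_filter] at hb ⊢
                  refine ⟨Finset.mem_univ _, ?_⟩
                  have hble : (b : ℕ) ≤ (a0 : ℕ) := hb.2
                  have hIb : Stmt17.en I' b = Stmt17.en I b :=
                    hbelow b (by rw [Fin.lt_def]; omega)
                  have hIbv : (Stmt17.en I' b : ℕ) = (Stmt17.en I b : ℕ) :=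
                    congrArg Fin.val hIb
                  rw [hJen, hgval, if_pos hble]
                  omega
              have hcard2 := Finset.card_le_card hsub
              rw [hcard'] at hcard2
              have hnm : astar ∉ Finset.univ.filter (fun a : Fin ℓ => (a : ℕ) ≤ (a0 : ℕ)) := by
                simp only [Finset.mem_filter, Finset.mem_univ, true_and]
                omega
              rw [Finset.card_insert_of_notMem hnm, hIic, Fin.card_Iic] at hcard2
              omega
          have hmlt : Stmt17.mval I' < Stmt17.mval I := Stmt17.mval_lt astar hbelow hlt
          exact IH (Stmt17.mval I') (by omega) I' rfl (Stmt17.not_top hk1 h2 hcard')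
    exact main (Stmt17.mval I₀) I₀ rfl hne₀
end
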